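/- arXiv:math/0611802 — 3 statements merged into one kernel-verified Lean document; each statement's English description precedes it below -/
import Mathlib

section
/- For every natural number k there exists a natural number F(k) such that every n-gon P in the plane with n ≥ F(k) has a convex sub-k-gon. (No strictness or non-degeneracy assumption on P is required.) -/
/-- The union of the edges of the polygon `P = (V_0, …, V_{n-1})`, i.e. of the closed
segments `[V_i, V_{i+1}]` (indices mod `n`, so the last edge is `[V_{n-1}, V_0]`). -/
def polygonEdges {n : ℕ} (P : Fin n → ℝ × ℝ) : Set (ℝ × ℝ) :=
  ⋃ i : Fin n, segment ℝ (P i) (P ⟨(i.1 + 1) % n, Nat.mod_lt _ i.pos⟩)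

/-- A polygon is convex iff the union of its edges is the topological boundary of the
convex hull of its vertex set. -/
def IsConvexPolygon {n : ℕ} (P : Fin n → ℝ × ℝ) : Prop :=
  polygonEdges P = frontier (convexHull ℝ (Set.range P))

/-- A polygon is strict iff any three vertices with distinct indices are non-collinear. -/
def IsStrictPolygon {n : ℕ} (P : Fin n → ℝ × ℝ) : Prop :=
  ∀ i j k : Fin n, i ≠ j → i ≠ k → j ≠ k →
    ¬ Collinear ℝ ({P i, P j, P k} : Set (ℝ × ℝ))

noncomputable section
namespace SubPoly

def cross (A B C : ℝ × ℝ) : ℝ := (B.1 - A.1) * (C.2 - A.2) - (B.2 - A.2) * (C.1 - A.1)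

lemma cross_cyclic (A B C : ℝ × ℝ) : cross A B C = cross B C A := by
  simp only [cross]; ring

lemma cross_swap (A B C : ℝ × ℝ) : cross A B C = -cross A C B := by
  simp only [cross]; ring

lemma cross_self_left (A C : ℝ × ℝ) : cross A A C = 0 := by simp only [cross]; ring
lemma cross_self_right (A B : ℝ × ℝ) : cross A B B = 0 := by simp only [cross]; ring
lemma cross_self_outer (A B : ℝ × ℝ) : cross A B A = 0 := by simp only [cross]; ring

lemma cross_combo (A B x y : ℝ × ℝ) (s t : ℝ) (h : s + t = 1) :
    cross A B (s • x + t • y) = s * cross A B x + t * cross A B y := by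
  have h1 : (s • x + t • y).1 = s * x.1 + t * y.1 := rfl
  have h2 : (s • x + t • y).2 = s * x.2 + t * y.2 := rfl
  simp only [cross, h1, h2]
  have : s = 1 - t := by linarith
  subst this; ring

lemma cross_swap_pts (A B C : ℝ × ℝ) :
    cross (Prod.swap A) (Prod.swap B) (Prod.swap C) = -cross A B C := by
  simp only [cross, Prod.swap]; ring

/-- parametrize a point with zero cross on the line through A ≠ B -/
lemma exists_param_of_cross_eq_zero {A B x : ℝ × ℝ} (hAB : A ≠ B)
    (h : cross A B x = 0) : ∃ r : ℝ, x = r • (B - A) + A := by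
  have hD : B.1 - A.1 ≠ 0 ∨ B.2 - A.2 ≠ 0 := by
    by_contra hc
    push_neg at hc
    exact hAB (Prod.ext (by linarith [hc.1]) (by linarith [hc.2])).symm
  rcases hD with hD | hD
  · refine ⟨(x.1 - A.1) / (B.1 - A.1), Prod.ext ?_ ?_⟩ <;>
      simp only [Prod.smul_fst, Prod.smul_snd, Prod.fst_add, Prod.snd_add, Prod.fst_sub,
        Prod.snd_sub, smul_eq_mul]
    · field_simp; ring
    · simp only [cross] at h; field_simp; nlinarith [h]
  · refine ⟨(x.2 - A.2) / (B.2 - A.2), Prod.ext ?_ ?_⟩ <;>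
      simp only [Prod.smul_fst, Prod.smul_snd, Prod.fst_add, Prod.snd_add, Prod.fst_sub,
        Prod.snd_sub, smul_eq_mul]
    · simp only [cross] at h; field_simp; nlinarith [h]
    · field_simp; ring


lemma interior_empty_of_subset_line {p v : ℝ × ℝ} {s : Set (ℝ × ℝ)}
    (hs : ∀ x ∈ s, ∃ t : ℝ, x = t • v + p) : interior s = ∅ := by
  by_contra hne
  obtain ⟨x, hx⟩ := Set.nonempty_iff_ne_empty.2 hne
  obtain ⟨ε, hε, hball⟩ := Metric.isOpen_iff.1 isOpen_interior x hx
  have hxs : x ∈ s := interior_subset hx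
  obtain ⟨t, ht⟩ := hs x hxs
  by_cases hv : v = 0
  · have hxp : x = p := by simpa [hv] using ht
    set y : ℝ × ℝ := (x.1 + ε / 2, x.2) with hy
    have hdy : dist y x < ε := by
      have : dist y x = ε / 2 := by
        simp [hy, Prod.dist_eq, Real.dist_eq, abs_of_pos hε]; positivity
      linarith
    have hyint : y ∈ s := interior_subset (hball (by simpa [Metric.mem_ball] using hdy))
    obtain ⟨t', ht'⟩ := hs y hyint
    have : y = p := by simpa [hv] using ht'
    have : y.1 = x.1 := by rw [this, hxp]
    simp [hy] at this
    linarith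
  · have hv2 : 0 < v.1 ^ 2 + v.2 ^ 2 := by
      by_contra hc
      push_neg at hc
      have h1 : v.1 = 0 := by nlinarith
      have h2 : v.2 = 0 := by nlinarith
      exact hv (Prod.ext h1 h2)
    set δ : ℝ := ε / (2 * (|v.1| + |v.2| + 1)) with hδ
    have hpos : 0 < |v.1| + |v.2| + 1 := by positivity
    have hδpos : 0 < δ := by positivity
    set y : ℝ × ℝ := x + δ • (-v.2, v.1) with hy
    have hb : ∀ a : ℝ, |a| ≤ |v.1| + |v.2| → |δ * a| < ε := by
      intro a ha
      rw [abs_mul, abs_of_pos hδpos]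
      calc δ * |a| ≤ δ * (|v.1| + |v.2|) := mul_le_mul_of_nonneg_left ha hδpos.le
        _ < ε := by
            rw [hδ, div_mul_eq_mul_div, div_lt_iff₀ (by positivity)]
            nlinarith [abs_nonneg v.1, abs_nonneg v.2]
    have hdy : dist y x < ε := by
      have hyx : y - x = δ • (-v.2, v.1) := by simp [hy]
      rw [dist_eq_norm, hyx, Prod.norm_def]
      simp only [Prod.smul_fst, Prod.smul_snd, smul_eq_mul, Real.norm_eq_abs]
      exact max_lt (hb _ (by rw [abs_neg]; linarith [abs_nonneg v.1]))
        (hb _ (by linarith [abs_nonneg v.2]))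
    have hyint : y ∈ s := interior_subset (hball (by simpa [Metric.mem_ball] using hdy))
    obtain ⟨t', ht'⟩ := hs y hyint
    have e1 : y.1 = x.1 + δ * (-v.2) := rfl
    have e2 : y.2 = x.2 + δ * v.1 := rfl
    have f1 : x.1 = t * v.1 + p.1 := by rw [ht]; rfl
    have f2 : x.2 = t * v.2 + p.2 := by rw [ht]; rfl
    have g1 : y.1 = t' * v.1 + p.1 := by rw [ht']; rfl
    have g2 : y.2 = t' * v.2 + p.2 := by rw [ht']; rfl
    have k1 : δ * (-v.2) = (t' - t) * v.1 := by rw [e1, f1] at g1; linarith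
    have k2 : δ * v.1 = (t' - t) * v.2 := by rw [e2, f2] at g2; linarith
    have hz : δ * (v.1 ^ 2 + v.2 ^ 2) = 0 := by
      have a1 : (δ * -v.2) * v.2 = ((t' - t) * v.1) * v.2 := by rw [k1]
      have a2 : (δ * v.1) * v.1 = ((t' - t) * v.2) * v.1 := by rw [k2]
      nlinarith [a1, a2]
    nlinarith [hz, hδpos, hv2]

lemma edges_subset_hull {k : ℕ} (q : Fin k → ℝ × ℝ) :
    polygonEdges q ⊆ convexHull ℝ (Set.range q) := by
  refine Set.iUnion_subset fun i => ?_
  exact (convex_convexHull ℝ _).segment_subset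
    (subset_convexHull ℝ _ ⟨i, rfl⟩) (subset_convexHull ℝ _ ⟨_, rfl⟩)

lemma mem_segment_param (v p : ℝ × ℝ) {a b t : ℝ} (h : t ∈ Set.uIcc a b) :
    t • v + p ∈ segment ℝ (a • v + p) (b • v + p) := by
  have hseg : t ∈ segment ℝ a b := by
    rw [segment_eq_Icc']; exact h
  obtain ⟨s1, s2, hs1, hs2, hsum, hst⟩ := hseg
  rw [smul_eq_mul, smul_eq_mul] at hst
  refine ⟨s1, s2, hs1, hs2, hsum, Prod.ext ?_ ?_⟩ <;>
    simp only [Prod.smul_fst, Prod.smul_snd, Prod.fst_add, Prod.snd_add, smul_eq_mul]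
  · linear_combination v.1 * hst + p.1 * hsum
  · linear_combination v.2 * hst + p.2 * hsum

lemma convex_dot_le (α β c : ℝ) : Convex ℝ {y : ℝ × ℝ | y.1 * α + y.2 * β ≤ c} := by
  rintro y hy z hz a b ha hb hab
  simp only [Set.mem_setOf_eq, Prod.smul_fst, Prod.smul_snd, Prod.fst_add, Prod.snd_add,
    smul_eq_mul] at *
  calc (a * y.1 + b * z.1) * α + (a * y.2 + b * z.2) * β
      = a * (y.1 * α + y.2 * β) + b * (z.1 * α + z.2 * β) := by ring
    _ ≤ a * c + b * c := add_le_add (mul_le_mul_of_nonneg_left hy ha)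
        (mul_le_mul_of_nonneg_left hz hb)
    _ = c := by rw [← add_mul, hab, one_mul]

lemma convex_dot_ge (α β c : ℝ) : Convex ℝ {y : ℝ × ℝ | c ≤ y.1 * α + y.2 * β} := by
  rintro y hy z hz a b ha hb hab
  simp only [Set.mem_setOf_eq, Prod.smul_fst, Prod.smul_snd, Prod.fst_add, Prod.snd_add,
    smul_eq_mul] at *
  calc c = a * c + b * c := by rw [← add_mul, hab, one_mul]
    _ ≤ a * (y.1 * α + y.2 * β) + b * (z.1 * α + z.2 * β) :=
        add_le_add (mul_le_mul_of_nonneg_left hy ha) (mul_le_mul_of_nonneg_left hz hb)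
    _ = (a * y.1 + b * z.1) * α + (a * y.2 + b * z.2) * β := by ring

lemma isConvexPolygon_of_collinear {k : ℕ} (hk : 0 < k) (q : Fin k → ℝ × ℝ)
    (H : Collinear ℝ (Set.range q)) : IsConvexPolygon q := by
  obtain ⟨p, v, hvp⟩ := (collinear_iff_exists_forall_eq_smul_vadd (Set.range q)).1 H
  set L : Set (ℝ × ℝ) := {x | ∃ t : ℝ, x = t • v + p} with hL
  have hLconv : Convex ℝ L := by
    rintro x ⟨tx, rfl⟩ y ⟨ty, rfl⟩ a b ha hb hab
    refine ⟨a * tx + b * ty, Prod.ext ?_ ?_⟩ <;>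
      simp only [Prod.smul_fst, Prod.smul_snd, Prod.fst_add, Prod.snd_add, smul_eq_mul]
    · linear_combination p.1 * hab
    · linear_combination p.2 * hab
  have hrange : Set.range q ⊆ L := by
    intro x hx
    obtain ⟨r, hr⟩ := hvp x hx
    exact ⟨r, by simpa using hr⟩
  set K := convexHull ℝ (Set.range q) with hKdef
  have hKL : K ⊆ L := convexHull_min hrange hLconv
  have hKclosed : IsClosed K := (Set.finite_range q).isClosed_convexHull ℝ
  have hfront : frontier K = K := by
    rw [hKclosed.frontier_eq, interior_empty_of_subset_line (fun x hx => hKL hx),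
      Set.diff_empty]
  rw [IsConvexPolygon, hfront]
  refine Set.Subset.antisymm (edges_subset_hull q) ?_
  intro x hx
  obtain ⟨t, hxt⟩ := hKL hx
  by_cases hv0 : v = 0
  · have hq : ∀ i, q i = p := by
      intro i
      obtain ⟨r, hr⟩ := hvp (q i) ⟨i, rfl⟩
      simpa [hv0] using hr
    have hxp : x = p := by simpa [hv0] using hxt
    refine Set.mem_iUnion.2 ⟨⟨0, hk⟩, ?_⟩
    rw [hq, hq, segment_same]
    exact hxp
  · set τ : Fin k → ℝ := fun i => Classical.choose (hvp (q i) ⟨i, rfl⟩) with hτdef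
    have hτ : ∀ i, q i = τ i • v + p := by
      intro i
      have := Classical.choose_spec (hvp (q i) ⟨i, rfl⟩)
      simpa using this
    have hv2 : 0 < v.1 ^ 2 + v.2 ^ 2 := by
      by_contra hc
      push_neg at hc
      have h1 : v.1 ^ 2 = 0 := le_antisymm (by nlinarith [sq_nonneg v.2]) (sq_nonneg v.1)
      have h2 : v.2 ^ 2 = 0 := le_antisymm (by nlinarith [sq_nonneg v.1]) (sq_nonneg v.2)
      exact hv0 (Prod.ext (by simpa using sq_eq_zero_iff.1 h1) (by simpa using sq_eq_zero_iff.1 h2))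
    set ψ : ℝ × ℝ → ℝ := fun y => y.1 * v.1 + y.2 * v.2 with hψ
    have hψq : ∀ i, ψ (q i) = τ i * (v.1 ^ 2 + v.2 ^ 2) + ψ p := by
      intro i; rw [hτ i]
      simp only [hψ, Prod.smul_fst, Prod.smul_snd, Prod.fst_add, Prod.snd_add, smul_eq_mul]
      ring
    obtain ⟨imax, -, hmax⟩ := Finset.exists_max_image Finset.univ τ ⟨⟨0, hk⟩, Finset.mem_univ _⟩
    obtain ⟨imin, -, hmin⟩ := Finset.exists_min_image Finset.univ τ ⟨⟨0, hk⟩, Finset.mem_univ _⟩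
    -- bound t between τ imin and τ imax
    have hbound : ∀ (w : ℝ × ℝ) (hwK : w ∈ K) (tw : ℝ), w = tw • v + p → τ imin ≤ tw ∧ tw ≤ τ imax := by
      intro w hwK tw hw
      constructor
      · have hU : K ⊆ {y | ψ (q imin) ≤ ψ y} := by
          refine convexHull_min ?_ ?_
          · rintro _ ⟨i, rfl⟩
            have := hmin i (Finset.mem_univ i)
            simp only [Set.mem_setOf_eq, hψq]
            nlinarith
          · exact convex_dot_ge v.1 v.2 (ψ (q imin))
        have := hU hwK
        simp only [Set.mem_setOf_eq, hψq, hw] at this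
        simp only [hψ, Prod.smul_fst, Prod.smul_snd, Prod.fst_add, Prod.snd_add,
          smul_eq_mul] at this
        nlinarith
      · have hU : K ⊆ {y | ψ y ≤ ψ (q imax)} := by
          refine convexHull_min ?_ ?_
          · rintro _ ⟨i, rfl⟩
            have := hmax i (Finset.mem_univ i)
            simp only [Set.mem_setOf_eq, hψq]
            nlinarith
          · exact convex_dot_le v.1 v.2 (ψ (q imax))
        have := hU hwK
        simp only [Set.mem_setOf_eq, hψq, hw] at this
        simp only [hψ, Prod.smul_fst, Prod.smul_snd, Prod.fst_add, Prod.snd_add,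
          smul_eq_mul] at this
        nlinarith
    obtain ⟨htmin, htmax⟩ := hbound x hx t hxt
    -- discrete IVT
    have want : ∃ i : Fin k, t ∈ Set.uIcc (τ i) (τ ⟨((i : ℕ) + 1) % k, Nat.mod_lt _ hk⟩) := by
      by_contra hno
      push_neg at hno
      have hne : ∀ i, τ i ≠ t := by
        intro i he
        exact hno i (he ▸ Set.left_mem_uIcc)
      have hstep : ∀ i : Fin k, (τ i < t ↔ τ ⟨((i : ℕ) + 1) % k, Nat.mod_lt _ hk⟩ < t) := by
        intro i
        set j : Fin k := ⟨((i : ℕ) + 1) % k, Nat.mod_lt _ hk⟩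
        constructor
        · intro h1
          by_contra h2
          push_neg at h2
          exact hno i (Set.mem_uIcc.2 (Or.inl ⟨h1.le, h2⟩))
        · intro h1
          by_contra h2
          push_neg at h2
          exact hno i (Set.mem_uIcc.2 (Or.inr ⟨h1.le, h2⟩))
      have hprop : ∀ m : ℕ, ∀ hm : m < k, (τ ⟨m, hm⟩ < t ↔ τ ⟨0, hk⟩ < t) := by
        intro m
        induction m with
        | zero => intro hm; rfl
        | succ m ih =>
          intro hm
          have hm' : m < k := Nat.lt_of_succ_lt hm
          have h1 := hstep ⟨m, hm'⟩
          have h2 : (⟨((m : ℕ) + 1) % k, Nat.mod_lt _ hk⟩ : Fin k) = ⟨m + 1, hm⟩ := by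
            ext; simp [Nat.mod_eq_of_lt hm]
          rw [h2] at h1
          exact h1.symm.trans (ih hm')
      have e1 : τ imin < t := lt_of_le_of_ne htmin (hne imin)
      have e2 : τ imax < t := by
        have p1 := hprop imin.1 imin.isLt
        have p2 := hprop imax.1 imax.isLt
        simp only [Fin.eta] at p1 p2
        exact p2.2 (p1.1 e1)
      linarith
    obtain ⟨i, hti⟩ := want
    refine Set.mem_iUnion.2 ⟨i, ?_⟩
    rw [hτ i, hτ ⟨((i : ℕ) + 1) % k, Nat.mod_lt _ hk⟩, hxt]
    exact mem_segment_param v p hti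

lemma exists_sorted3 {α : Type*} [LinearOrder α] {P : α → Prop} {i1 i2 i3 : α}
    (h12 : i1 ≠ i2) (h13 : i1 ≠ i3) (h23 : i2 ≠ i3)
    (p1 : P i1) (p2 : P i2) (p3 : P i3) :
    ∃ a b c : α, a < b ∧ b < c ∧ P a ∧ P b ∧ P c := by
  rcases lt_trichotomy i1 i2 with h | h | h
  · rcases lt_trichotomy i2 i3 with g | g | g
    · exact ⟨i1, i2, i3, h, g, p1, p2, p3⟩
    · exact absurd g h23
    · rcases lt_trichotomy i1 i3 with f | f | f
      · exact ⟨i1, i3, i2, f, g, p1, p3, p2⟩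
      · exact absurd f h13
      · exact ⟨i3, i1, i2, f, h, p3, p1, p2⟩
  · exact absurd h h12
  · rcases lt_trichotomy i1 i3 with g | g | g
    · exact ⟨i2, i1, i3, h, g, p2, p1, p3⟩
    · exact absurd g h13
    · rcases lt_trichotomy i2 i3 with f | f | f
      · exact ⟨i2, i3, i1, f, g, p2, p3, p1⟩
      · exact absurd f h23
      · exact ⟨i3, i2, i1, f, h, p3, p2, p1⟩

set_option maxHeartbeats 1600000 in
theorem isConvexPolygon_of_strict {k : ℕ} (hk : 3 ≤ k) (q : Fin k → ℝ × ℝ)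
    (H : ∀ i j l : Fin k, i < j → j < l → 0 < cross (q i) (q j) (q l)) :
    IsConvexPolygon q := by
  have hk0 : 0 < k := by omega
  -- injectivity
  have key : ∀ i j : Fin k, i < j → q i ≠ q j := by
    intro i j hij heq
    by_cases hj1 : (j : ℕ) + 1 < k
    · have := H i j ⟨(j : ℕ) + 1, hj1⟩ hij (by simp [Fin.lt_def])
      rw [heq, cross_self_left] at this
      exact lt_irrefl 0 this
    · by_cases hi : 0 < (i : ℕ)
      · have := H ⟨0, hk0⟩ i j (by simpa [Fin.lt_def] using hi) hij
        rw [heq, cross_self_right] at this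
        exact lt_irrefl 0 this
      · have hi0 : (i : ℕ) = 0 := by omega
        have hjk : (j : ℕ) = k - 1 := by have := j.isLt; omega
        have h1k : (1 : ℕ) < k - 1 := by
          by_contra hc
          -- k = 3 gives 1 < 2 ok; need k ≥ 3 ⇒ 1 < k-1 ⇔ k > 2 ✓
          omega
        have := H i ⟨1, by omega⟩ j (by simp [Fin.lt_def, hi0]) (by simp [Fin.lt_def, hjk]; omega)
        rw [heq, cross_self_outer] at this
        exact lt_irrefl 0 this
  have hinj : Function.Injective q := by
    intro i j heq
    by_contra hne
    rcases lt_trichotomy i j with h | h | h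
    · exact key i j h heq
    · exact hne h
    · exact key j i h heq.symm
  -- all points on the nonnegative side of each edge
  have hside : ∀ i m : Fin k,
      0 ≤ cross (q i) (q ⟨((i : ℕ) + 1) % k, Nat.mod_lt _ hk0⟩) (q m) := by
    intro i m
    set j : Fin k := ⟨((i : ℕ) + 1) % k, Nat.mod_lt _ hk0⟩ with hjdef
    by_cases hw : (i : ℕ) + 1 < k
    · have hjv : (j : ℕ) = (i : ℕ) + 1 := Nat.mod_eq_of_lt hw
      have hij : i < j := by rw [Fin.lt_def, hjv]; omega
      rcases lt_trichotomy m i with h | h | h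
      · rw [← cross_cyclic (q m) (q i) (q j)]
        exact (H m i j h hij).le
      · rw [h, cross_self_outer]
      · rcases lt_trichotomy m j with h2 | h2 | h2
        · exfalso; rw [Fin.lt_def] at h h2; omega
        · rw [h2, cross_self_right]
        · exact (H i j m hij h2).le
    · have hiv : (i : ℕ) = k - 1 := by have := i.isLt; omega
      have hjv : (j : ℕ) = 0 := by
        simp only [hjdef]
        have : (i : ℕ) + 1 = k := by omega
        simp [this]
      have hji : j < i := by rw [Fin.lt_def, hjv, hiv]; omega
      rcases lt_trichotomy m j with h | h | h
      · exfalso; rw [Fin.lt_def, hjv] at h; omega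
      · rw [h, cross_self_right]
      · rcases lt_trichotomy m i with h2 | h2 | h2
        · rw [cross_cyclic]
          exact (H j m i h h2).le
        · rw [h2, cross_self_outer]
        · exfalso; rw [Fin.lt_def, hiv] at h2; have := m.isLt; omega
  set K := convexHull ℝ (Set.range q) with hKdef
  have hKclosed : IsClosed K := (Set.finite_range q).isClosed_convexHull ℝ
  have hqK : ∀ i, q i ∈ K := fun i => subset_convexHull ℝ _ ⟨i, rfl⟩
  -- halfplanes contain K
  have hKside : ∀ i : Fin k,
      K ⊆ {x | 0 ≤ cross (q i) (q ⟨((i : ℕ) + 1) % k, Nat.mod_lt _ hk0⟩) x} := by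
    intro i
    refine convexHull_min ?_ ?_
    · rintro _ ⟨m, rfl⟩; exact hside i m
    · rintro y hy z hz a b ha hb hab
      simp only [Set.mem_setOf_eq] at *
      rw [cross_combo _ _ _ _ _ _ hab]
      positivity
  have hne_nxt : ∀ i : Fin k, q i ≠ q ⟨((i : ℕ) + 1) % k, Nat.mod_lt _ hk0⟩ := by
    intro i
    apply hinj.ne
    intro hc
    have := congrArg Fin.val hc
    simp only at this
    have hlt := i.isLt
    rcases Nat.lt_or_ge ((i : ℕ) + 1) k with h | h
    · rw [Nat.mod_eq_of_lt h] at this; omega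
    · have : ((i : ℕ) + 1) % k = 0 := by
        have : (i : ℕ) + 1 = k := by omega
        simp [this]
      omega
  -- edges ⊆ frontier K
  have hEF : polygonEdges q ⊆ frontier K := by
    refine Set.iUnion_subset fun i => fun y hy => ?_
    set j : Fin k := ⟨((i : ℕ) + 1) % k, Nat.mod_lt _ hk0⟩ with hjdef
    set A := q i with hA
    set B := q j with hB
    have hyK : y ∈ K := (convex_convexHull ℝ _).segment_subset (hqK i) (hqK j) hy
    have hg0 : cross A B y = 0 := by
      obtain ⟨a, b, ha, hb, hab, rfl⟩ := hy
      rw [cross_combo _ _ _ _ _ _ hab, cross_self_outer, cross_self_right]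
      ring
    have hyint : y ∉ interior K := by
      intro hyi
      obtain ⟨ε, hε, hball⟩ := Metric.isOpen_iff.1 isOpen_interior y hyi
      have hAB : A ≠ B := hne_nxt i
      set D : ℝ × ℝ := B - A with hD
      have hD2 : 0 < D.1 ^ 2 + D.2 ^ 2 := by
        by_contra hc
        push_neg at hc
        have h1 : D.1 ^ 2 = 0 := le_antisymm (by nlinarith [sq_nonneg D.2]) (sq_nonneg D.1)
        have h2 : D.2 ^ 2 = 0 := le_antisymm (by nlinarith [sq_nonneg D.1]) (sq_nonneg D.2)
        have h1' : D.1 = 0 := by simpa using sq_eq_zero_iff.1 h1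
        have h2' : D.2 = 0 := by simpa using sq_eq_zero_iff.1 h2
        apply hAB
        have : B.1 - A.1 = 0 := h1'
        have h2'' : B.2 - A.2 = 0 := h2'
        exact Prod.ext (by linarith) (by linarith)
      set δ : ℝ := ε / (2 * (|D.1| + |D.2| + 1)) with hδ
      have hδpos : 0 < δ := by positivity
      set u : ℝ × ℝ := δ • (D.2, -D.1) with hu
      have hnb : ∀ a : ℝ, |a| ≤ |D.1| + |D.2| → |δ * a| < ε := by
        intro a ha
        rw [abs_mul, abs_of_pos hδpos]
        calc δ * |a| ≤ δ * (|D.1| + |D.2|) := mul_le_mul_of_nonneg_left ha hδpos.le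
          _ < ε := by
              rw [hδ, div_mul_eq_mul_div, div_lt_iff₀ (by positivity)]
              nlinarith [abs_nonneg D.1, abs_nonneg D.2]
      have hdy : dist (y + u) y < ε := by
        have hyx : y + u - y = u := by ring
        rw [dist_eq_norm, hyx, hu, Prod.norm_def]
        simp only [Prod.smul_fst, Prod.smul_snd, smul_eq_mul, Real.norm_eq_abs]
        exact max_lt (hnb _ (by linarith [abs_nonneg D.1]))
          (hnb _ (by rw [abs_neg]; linarith [abs_nonneg D.2]))
      have hmem : y + u ∈ K := interior_subset (hball (by simpa [Metric.mem_ball] using hdy))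
      have hsd := hKside i hmem
      simp only [Set.mem_setOf_eq] at hsd
      have hcalc : cross A B (y + u) = cross A B y - δ * (D.1 ^ 2 + D.2 ^ 2) := by
        simp only [cross, hu, hD, Prod.fst_add, Prod.snd_add, Prod.smul_fst, Prod.smul_snd,
          Prod.fst_sub, Prod.snd_sub, smul_eq_mul]
        ring
      rw [hcalc, hg0] at hsd
      nlinarith
    rw [hKclosed.frontier_eq]
    exact ⟨hyK, hyint⟩
  -- span is top, interior nonempty
  have hIntNe : (interior K).Nonempty := by
    rw [(convex_convexHull ℝ _).interior_nonempty_iff_affineSpan_eq_top,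
      affineSpan_convexHull]
    have h01 : (⟨0, hk0⟩ : Fin k) < ⟨1, by omega⟩ := by simp [Fin.lt_def]
    have h12 : (⟨1, by omega⟩ : Fin k) < ⟨2, by omega⟩ := by simp [Fin.lt_def]
    have hcr := H _ _ _ h01 h12
    set A := q ⟨0, hk0⟩
    set B := q ⟨1, by omega⟩
    set C := q ⟨2, by omega⟩
    rw [eq_top_iff]
    rintro x -
    have hA : A ∈ affineSpan ℝ (Set.range q) := mem_affineSpan ℝ ⟨_, rfl⟩
    have hB : B ∈ affineSpan ℝ (Set.range q) := mem_affineSpan ℝ ⟨_, rfl⟩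
    have hC : C ∈ affineSpan ℝ (Set.range q) := mem_affineSpan ℝ ⟨_, rfl⟩
    set d1 : ℝ × ℝ := B - A with hd1
    set d2 : ℝ × ℝ := C - A with hd2
    have hdet : d1.1 * d2.2 - d1.2 * d2.1 ≠ 0 := by
      have : d1.1 * d2.2 - d1.2 * d2.1 = cross A B C := by
        simp only [cross, hd1, hd2, Prod.fst_sub, Prod.snd_sub]; try ring
      rw [this]; exact ne_of_gt hcr
    set det := d1.1 * d2.2 - d1.2 * d2.1 with hdetdef
    set α : ℝ := ((x.1 - A.1) * d2.2 - (x.2 - A.2) * d2.1) / det with hα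
    set β : ℝ := (d1.1 * (x.2 - A.2) - d1.2 * (x.1 - A.1)) / det with hβ
    have hx : x - A = α • d1 + β • d2 := by
      refine Prod.ext ?_ ?_ <;>
        simp only [Prod.smul_fst, Prod.smul_snd, Prod.fst_add, Prod.snd_add, Prod.fst_sub,
          Prod.snd_sub, smul_eq_mul, hα, hβ]
      · field_simp; ring
      · field_simp; ring
    have hd1m : d1 ∈ (affineSpan ℝ (Set.range q)).direction := by
      have := AffineSubspace.vsub_mem_direction hB hA
      simpa [hd1] using this
    have hd2m : d2 ∈ (affineSpan ℝ (Set.range q)).direction := by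
      have := AffineSubspace.vsub_mem_direction hC hA
      simpa [hd2] using this
    have hv : x -ᵥ A ∈ (affineSpan ℝ (Set.range q)).direction := by
      rw [vsub_eq_sub, hx]
      exact Submodule.add_mem _ (Submodule.smul_mem _ _ hd1m) (Submodule.smul_mem _ _ hd2m)
    have := AffineSubspace.vadd_mem_of_mem_direction hv hA
    rwa [vsub_vadd] at this
  -- frontier ⊆ edges
  have hFE : frontier K ⊆ polygonEdges q := by
    intro z hz
    have hzK : z ∈ K := by
      have := frontier_subset_closure (s := K) hz
      rwa [hKclosed.closure_eq] at this
    have hzNotInt : z ∉ interior K := by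
      rw [hKclosed.frontier_eq] at hz
      exact hz.2
    obtain ⟨w, hw⟩ := hIntNe
    obtain ⟨f, hf⟩ := geometric_hahn_banach_open_point
      ((convex_convexHull ℝ (Set.range q)).interior) isOpen_interior hzNotInt
    have hfK : ∀ u ∈ K, f u ≤ f z := by
      intro u hu
      by_contra hlt
      push_neg at hlt
      set S : ℝ := |f u| + |f w| + 1 with hS
      have hSpos : 0 < S := by positivity
      set t : ℝ := min 1 ((f u - f z) / (2 * S)) with ht
      have htpos : 0 < t := lt_min one_pos (div_pos (by linarith) (by positivity))
      have ht1 : t ≤ 1 := min_le_left _ _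
      have hmem := (convex_convexHull ℝ (Set.range q)).combo_closure_interior_mem_interior
        (subset_closure hu) hw (a := 1 - t) (b := t) (by linarith) htpos (by ring)
      have hflt := hf _ hmem
      rw [map_add, map_smul, map_smul, smul_eq_mul, smul_eq_mul] at hflt
      have htle : t ≤ (f u - f z) / (2 * S) := min_le_right _ _
      have hb1 : f u - f w ≤ S := by
        have h1 := le_abs_self (f u)
        have h2 := neg_abs_le (f w)
        rw [hS]; linarith
      have h2 : t * (f u - f w) ≤ t * S := mul_le_mul_of_nonneg_left hb1 htpos.le
      have h3 : t * S ≤ (f u - f z) / (2 * S) * S := mul_le_mul_of_nonneg_right htle hSpos.le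
      have h4 : (f u - f z) / (2 * S) * S = (f u - f z) / 2 := by field_simp
      nlinarith [hflt]
    set c := f z with hc
    set F : Finset (ℝ × ℝ) := Finset.univ.image q with hF
    have hzF : z ∈ convexHull ℝ (↑F : Set (ℝ × ℝ)) := by
      have hFr : (Set.range q) = (↑F : Set (ℝ × ℝ)) := by simp [hF]
      rwa [hKdef, hFr] at hzK
    rw [Finset.convexHull_eq] at hzF
    obtain ⟨w₀, hw₀, hw1, hcm⟩ := hzF
    have hFK : ∀ y ∈ F, y ∈ K := by
      intro y hy
      rw [hF, Finset.mem_image] at hy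
      obtain ⟨i, -, hi⟩ := hy
      rw [← hi]; exact hqK i
    have hz_eq : ∑ y ∈ F, w₀ y • y = z := by
      rw [← hcm, Finset.centerMass_eq_of_sum_1 _ id hw1]
      rfl
    have hfz_eq : ∑ y ∈ F, w₀ y * f y = c := by
      have hce := congrArg f hz_eq
      rw [map_sum] at hce
      simpa [smul_eq_mul] using hce
    have hzero : ∑ y ∈ F, w₀ y * (c - f y) = 0 := by
      have he : ∑ y ∈ F, w₀ y * (c - f y)
          = (∑ y ∈ F, w₀ y) * c - ∑ y ∈ F, w₀ y * f y := by
        rw [Finset.sum_mul, ← Finset.sum_sub_distrib]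
        congr 1; ext y; ring
      rw [he, hw1, one_mul, hfz_eq, sub_self]
    have hsupp : ∀ y ∈ F, w₀ y ≠ 0 → f y = c := by
      intro y hy hwne
      have heach := (Finset.sum_eq_zero_iff_of_nonneg
        (fun y hy => mul_nonneg (hw₀ y hy) (by linarith [hfK y (hFK y hy)]))).1 hzero y hy
      rcases mul_eq_zero.1 heach with h | h
      · exact absurd h hwne
      · linarith
    set F' := F.filter (fun y => f y = c) with hF'
    have hsplit : ∑ y ∈ F', w₀ y = 1 := by
      have h := Finset.sum_filter_add_sum_filter_not F (fun y => f y = c) w₀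
      have h2 : ∑ y ∈ F.filter (fun y => ¬ f y = c), w₀ y = 0 :=
        Finset.sum_eq_zero (fun y hy => by
          rw [Finset.mem_filter] at hy
          by_contra hne
          exact hy.2 (hsupp y hy.1 hne))
      rw [h2, add_zero, hw1] at h
      exact h
    have hz_eq' : ∑ y ∈ F', w₀ y • y = z := by
      have h := Finset.sum_filter_add_sum_filter_not F (fun y => f y = c)
        (fun y => w₀ y • y)
      have h2 : ∑ y ∈ F.filter (fun y => ¬ f y = c), w₀ y • y = 0 :=
        Finset.sum_eq_zero (fun y hy => by
          rw [Finset.mem_filter] at hy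
          have hw0 : w₀ y = 0 := by
            by_contra hne; exact hy.2 (hsupp y hy.1 hne)
          rw [hw0, zero_smul])
      rw [h2, add_zero, hz_eq] at h
      exact h
    have hzF' : z ∈ convexHull ℝ (↑F' : Set (ℝ × ℝ)) := by
      have hin := F'.centerMass_mem_convexHull (w := w₀) (z := id)
        (fun y hy => hw₀ y (Finset.mem_of_mem_filter y hy))
        (by rw [hsplit]; norm_num) (fun y hy => Finset.mem_coe.2 hy)
      rwa [Finset.centerMass_eq_of_sum_1 _ id hsplit,
        (by simp : ∑ y ∈ F', w₀ y • id y = ∑ y ∈ F', w₀ y • y), hz_eq'] at hin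
    set a := f (1, 0) with haa
    set b := f (0, 1) with hbb
    have habr : ∀ u : ℝ × ℝ, f u = a * u.1 + b * u.2 := by
      intro u
      have hu : u = u.1 • ((1:ℝ), (0:ℝ)) + u.2 • ((0:ℝ), (1:ℝ)) := by
        refine Prod.ext ?_ ?_ <;> simp
      conv_lhs => rw [hu]
      rw [map_add, map_smul, map_smul, smul_eq_mul, smul_eq_mul]
      ring
    have hfne : ¬(a = 0 ∧ b = 0) := by
      rintro ⟨ha0, hb0⟩
      have h1 : f w < f z := hf w hw
      have h2 : f w = 0 := by rw [habr, ha0, hb0]; ring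
      have h3 : f z = 0 := by rw [habr, ha0, hb0]; ring
      rw [h2, h3] at h1; exact lt_irrefl 0 h1
    have hline : ∀ u1 u2 u3 : ℝ × ℝ, f u1 = c → f u2 = c → f u3 = c →
        cross u1 u2 u3 = 0 := by
      intro u1 u2 u3 h1 h2 h3
      rw [habr] at h1 h2 h3
      have hD : a * (u2.1 - u1.1) + b * (u2.2 - u1.2) = 0 := by linarith
      have hX : a * (u3.1 - u1.1) + b * (u3.2 - u1.2) = 0 := by linarith
      have hcra : a * cross u1 u2 u3 = 0 := by
        simp only [cross]
        linear_combination (u3.2 - u1.2) * hD - (u2.2 - u1.2) * hX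
      have hcrb : b * cross u1 u2 u3 = 0 := by
        simp only [cross]
        linear_combination (u2.1 - u1.1) * hX - (u3.1 - u1.1) * hD
      by_cases ha0 : a = 0
      · have hb0 : b ≠ 0 := fun h => hfne ⟨ha0, h⟩
        exact (mul_eq_zero.1 hcrb).resolve_left hb0
      · exact (mul_eq_zero.1 hcra).resolve_left ha0
    have hmemF' : ∀ y ∈ F', ∃ i : Fin k, q i = y := by
      intro y hy
      have hyF := Finset.mem_of_mem_filter y hy
      rw [hF, Finset.mem_image] at hyF
      obtain ⟨i, -, hi⟩ := hyF
      exact ⟨i, hi⟩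
    have hfF' : ∀ y ∈ F', f y = c := fun y hy => (Finset.mem_filter.1 hy).2
    have hcard : F'.card ≤ 2 := by
      by_contra hgt
      push_neg at hgt
      obtain ⟨y1, y2, y3, hy1, hy2, hy3, h12, h13, h23⟩ := Finset.two_lt_card_iff.1 hgt
      obtain ⟨i1, hi1⟩ := hmemF' y1 hy1
      obtain ⟨i2, hi2⟩ := hmemF' y2 hy2
      obtain ⟨i3, hi3⟩ := hmemF' y3 hy3
      have hii12 : i1 ≠ i2 := fun h => h12 (by rw [← hi1, ← hi2, h])
      have hii13 : i1 ≠ i3 := fun h => h13 (by rw [← hi1, ← hi3, h])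
      have hii23 : i2 ≠ i3 := fun h => h23 (by rw [← hi2, ← hi3, h])
      obtain ⟨a', b', c', hab', hbc', p1, p2, p3⟩ :=
        exists_sorted3 (P := fun i : Fin k => f (q i) = c) hii12 hii13 hii23
          (by show f (q i1) = c; rw [hi1]; exact hfF' y1 hy1)
          (by show f (q i2) = c; rw [hi2]; exact hfF' y2 hy2)
          (by show f (q i3) = c; rw [hi3]; exact hfF' y3 hy3)
      have := H a' b' c' hab' hbc'
      rw [hline (q a') (q b') (q c') p1 p2 p3] at this
      exact lt_irrefl 0 this
    have hne' : F'.Nonempty := by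
      rw [Finset.nonempty_iff_ne_empty]
      intro h
      rw [h] at hzF'
      simp only [Finset.coe_empty, convexHull_empty] at hzF'
      exact hzF'
    have hcc : F'.card = 1 ∨ F'.card = 2 := by
      have := Finset.card_pos.2 hne'; omega
    have hedge : ∀ i j : Fin k, i < j → f (q i) = c → f (q j) = c →
        F' = {q i, q j} → z ∈ segment ℝ (q i) (q j) → z ∈ polygonEdges q := by
      intro i j hij hfi hfj hFij hseg
      have hcons : (j : ℕ) = (i : ℕ) + 1 ∨ ((i : ℕ) = 0 ∧ (j : ℕ) = k - 1) := by
        by_contra hbad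
        push_neg at hbad
        obtain ⟨hb1, hb2⟩ := hbad
        have hijv : (i : ℕ) < (j : ℕ) := Fin.lt_def.1 hij
        have hj1 : (i : ℕ) + 1 < (j : ℕ) := by omega
        set m : Fin k := ⟨(i : ℕ) + 1, by have := j.isLt; omega⟩ with hm
        have him : i < m := by rw [Fin.lt_def]; simp [hm]
        have hmj : m < j := by rw [Fin.lt_def]; simp [hm]; omega
        obtain ⟨m', hm'⟩ : ∃ m' : Fin k, m' < i ∨ j < m' := by
          by_cases hi0 : (i : ℕ) = 0
          · have hjk : (j : ℕ) ≠ k - 1 := hb2 hi0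
            refine ⟨⟨k - 1, by omega⟩, Or.inr ?_⟩
            rw [Fin.lt_def]; have := j.isLt; simp; omega
          · exact ⟨⟨0, hk0⟩, Or.inl (by rw [Fin.lt_def]; simp; omega)⟩
        have hval : ∀ n : Fin k, n ≠ i → n ≠ j → f (q n) < c := by
          intro n hni hnj
          have hle := hfK (q n) (hqK n)
          rcases lt_or_eq_of_le hle with h | h
          · exact h
          · exfalso
            have hmemn : q n ∈ F' := Finset.mem_filter.2
              ⟨by rw [hF]; exact Finset.mem_image_of_mem q (Finset.mem_univ n), h⟩
            rw [hFij] at hmemn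
            simp only [Finset.mem_insert, Finset.mem_singleton] at hmemn
            rcases hmemn with h' | h'
            · exact hni (hinj h')
            · exact hnj (hinj h')
        have hmc : f (q m) < c := hval m him.ne' hmj.ne
        have hm'c : f (q m') < c := by
          rcases hm' with h | h
          · exact hval m' h.ne (by intro he; rw [he] at h; exact absurd (h.trans hij) (lt_irrefl _))
          · exact hval m' (by intro he; rw [he] at h; exact absurd (hij.trans h) (lt_irrefl _)) h.ne'
        set A := q i with hAd
        set B := q j with hBd
        have hDr : a * (B.1 - A.1) + b * (B.2 - A.2) = 0 := by
          have e1 := habr A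
          have e2 := habr B
          rw [hfi] at e1
          rw [hfj] at e2
          linarith
        have hABne : A ≠ B := key i j hij
        have hfA : a * A.1 + b * A.2 = c := by rw [← habr]; exact hfi
        obtain ⟨lam, hlam0, hlam⟩ : ∃ lam : ℝ, lam ≠ 0 ∧
            ∀ x : ℝ × ℝ, f x - c = lam * cross A B x := by
          by_cases hD1 : B.1 - A.1 ≠ 0
          · have hbne : b ≠ 0 := by
              intro hb0
              rw [hb0] at hDr
              have haz : a * (B.1 - A.1) = 0 := by linarith
              rcases mul_eq_zero.1 haz with h | h
              · exact hfne ⟨h, hb0⟩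
              · exact hD1 h
            refine ⟨b / (B.1 - A.1), div_ne_zero hbne hD1, fun x => ?_⟩
            have e1 : f x - c = a * (x.1 - A.1) + b * (x.2 - A.2) := by
              rw [habr x]; linear_combination hfA
            rw [e1, div_mul_eq_mul_div, eq_div_iff hD1]
            simp only [cross]
            linear_combination (x.1 - A.1) * hDr
          · push_neg at hD1
            have hD2 : B.2 - A.2 ≠ 0 := by
              intro h
              exact hABne (Prod.ext (by linarith) (by linarith))
            have hb0 : b = 0 := by
              have hbz : b * (B.2 - A.2) = 0 := by
                have : a * (B.1 - A.1) = 0 := by rw [hD1]; ring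
                linarith
              exact (mul_eq_zero.1 hbz).resolve_right hD2
            have hane : a ≠ 0 := fun h => hfne ⟨h, hb0⟩
            refine ⟨-a / (B.2 - A.2), div_ne_zero (neg_ne_zero.2 hane) hD2, fun x => ?_⟩
            have e1 : f x - c = a * (x.1 - A.1) + b * (x.2 - A.2) := by
              rw [habr x]; linear_combination hfA
            rw [e1, hb0]
            simp only [cross, hD1]
            field_simp
            ring
        have hcm : 0 < cross A (q m) B := H i m j him hmj
        have hcm' : 0 < cross A B (q m') := by
          rcases hm' with h | h
          · rw [← cross_cyclic (q m') A B]
            exact H m' i j h hij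
          · exact H i j m' hij h
        have hneg : cross A B (q m) < 0 := by
          rw [cross_swap A B (q m)]
          linarith
        have l1 := hlam (q m)
        have l2 := hlam (q m')
        have hlampos : 0 < lam := by nlinarith [l1, hmc, hneg]
        have hlamneg : lam < 0 := by nlinarith [l2, hm'c, hcm']
        linarith
      rcases hcons with hcons | hcons
      · refine Set.mem_iUnion.2 ⟨i, ?_⟩
        have hjj : (⟨((i : ℕ) + 1) % k, Nat.mod_lt _ i.pos⟩ : Fin k) = j := by
          ext
          simp only []
          rw [← hcons, Nat.mod_eq_of_lt j.isLt]
        rw [hjj]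
        exact hseg
      · refine Set.mem_iUnion.2 ⟨j, ?_⟩
        have hjj : (⟨((j : ℕ) + 1) % k, Nat.mod_lt _ j.pos⟩ : Fin k) = i := by
          ext
          simp only []
          rw [hcons.2, hcons.1]
          have hkk : k - 1 + 1 = k := by omega
          rw [hkk, Nat.mod_self]
        rw [hjj, segment_symm]
        exact hseg
    rcases hcc with hc1 | hc2
    · obtain ⟨y, hy⟩ := Finset.card_eq_one.1 hc1
      rw [hy] at hzF'
      simp only [Finset.coe_singleton, convexHull_singleton, Set.mem_singleton_iff] at hzF'
      obtain ⟨i, hi⟩ := hmemF' y (by rw [hy]; exact Finset.mem_singleton_self y)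
      refine Set.mem_iUnion.2 ⟨i, ?_⟩
      rw [hzF', ← hi]
      exact left_mem_segment ℝ _ _
    · obtain ⟨y1, y2, hy12, hy⟩ := Finset.card_eq_two.1 hc2
      have hzseg : z ∈ segment ℝ y1 y2 := by
        rw [hy] at hzF'
        simp only [Finset.coe_insert, Finset.coe_singleton] at hzF'
        rwa [convexHull_pair] at hzF'
      obtain ⟨i, hi⟩ := hmemF' y1 (by rw [hy]; simp)
      obtain ⟨j, hj⟩ := hmemF' y2 (by rw [hy]; simp)
      have hfi : f (q i) = c := by rw [hi]; exact hfF' y1 (by rw [hy]; simp)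
      have hfj : f (q j) = c := by rw [hj]; exact hfF' y2 (by rw [hy]; simp)
      have hijne : i ≠ j := fun h => hy12 (by rw [← hi, ← hj, h])
      rcases lt_or_gt_of_ne hijne with h | h
      · exact hedge i j h hfi hfj (by rw [hy, hi, hj]) 
          (by rw [← hi, ← hj] at hzseg; exact hzseg)
      · exact hedge j i h hfj hfi (by rw [hy, hi, hj, Finset.pair_comm])
          (by rw [segment_symm]; rw [← hi, ← hj] at hzseg; exact hzseg)
  rw [IsConvexPolygon]
  exact Set.Subset.antisymm hEF hFE



def rbound : ℕ → ℕ
  | 0 => 0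
  | M + 1 => 3 ^ (3 * rbound M) + 1

lemma pairChain (M : ℕ) : ∀ (c : ℕ → ℕ → Fin 3) (S : Finset ℕ), 3 ^ M ≤ S.card →
    ∃ b : Fin M → ℕ, StrictMono b ∧ (∀ i, b i ∈ S) ∧
      ∃ d : Fin M → Fin 3, ∀ i j, i < j → c (b i) (b j) = d i := by
  induction M with
  | zero =>
    intro c S _
    exact ⟨Fin.elim0, fun i => i.elim0, fun i => i.elim0, Fin.elim0, fun i => i.elim0⟩
  | succ M ih =>
    intro c S hS
    have hSne : S.Nonempty := by
      rw [← Finset.card_pos]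
      calc 0 < 3 ^ (M + 1) := by positivity
        _ ≤ S.card := hS
    set a := S.min' hSne with ha
    set S' := S.erase a with hS'
    have hcard : 3 ^ (M + 1) - 1 ≤ S'.card := by
      rw [hS', Finset.card_erase_of_mem (S.min'_mem hSne)]
      omega
    have hfib : S'.card = ∑ t : Fin 3, (S'.filter (fun x => c a x = t)).card :=
      Finset.card_eq_sum_card_fiberwise (fun x _ => Finset.mem_univ (c a x))
    have hex : ∃ t : Fin 3, 3 ^ M ≤ (S'.filter (fun x => c a x = t)).card := by
      by_contra hc
      push_neg at hc
      have h0 := hc 0; have h1 := hc 1; have h2 := hc 2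
      rw [Fin.sum_univ_three] at hfib
      have : 3 ^ (M + 1) = 3 * 3 ^ M := by ring
      omega
    obtain ⟨t0, ht0⟩ := hex
    obtain ⟨b', hb'mono, hb'mem, d', hd'⟩ := ih (c) (S'.filter (fun x => c a x = t0)) ht0
    have hb'S : ∀ i, b' i ∈ S' := fun i => Finset.mem_of_mem_filter _ (hb'mem i)
    have halt : ∀ i, a < b' i := by
      intro i
      have h1 : b' i ∈ S := Finset.mem_of_mem_erase (hb'S i)
      have h2 : b' i ≠ a := Finset.ne_of_mem_erase (hb'S i)
      exact lt_of_le_of_ne (S.min'_le _ h1) (Ne.symm h2)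
    refine ⟨Fin.cases a b', ?_, ?_, Fin.cases t0 d', ?_⟩
    · intro i j hij
      rcases Fin.eq_zero_or_eq_succ j with rfl | ⟨j', rfl⟩
      · exact absurd hij (Fin.not_lt_zero i)
      · rcases Fin.eq_zero_or_eq_succ i with rfl | ⟨i', rfl⟩
        · simpa using halt j'
        · simpa using hb'mono (Fin.succ_lt_succ_iff.1 hij)
    · intro i
      rcases Fin.eq_zero_or_eq_succ i with rfl | ⟨i', rfl⟩
      · simpa using S.min'_mem hSne
      · simpa using Finset.mem_of_mem_erase (hb'S i')
    · intro i j hij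
      rcases Fin.eq_zero_or_eq_succ j with rfl | ⟨j', rfl⟩
      · exact absurd hij (Fin.not_lt_zero i)
      · rcases Fin.eq_zero_or_eq_succ i with rfl | ⟨i', rfl⟩
        · simpa using (Finset.mem_filter.1 (hb'mem j')).2
        · simpa using hd' i' j' (Fin.succ_lt_succ_iff.1 hij)

lemma pigeon3 {M : ℕ} (m : ℕ) (hM : M = 3 * m) (d : Fin M → Fin 3) :
    ∃ t : Fin 3, m ≤ (Finset.univ.filter (fun i => d i = t)).card := by
  by_contra hc
  push_neg at hc
  have h0 := hc 0; have h1 := hc 1; have h2 := hc 2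
  have hfib : (Finset.univ : Finset (Fin M)).card
      = ∑ t : Fin 3, (Finset.univ.filter (fun i => d i = t)).card :=
    Finset.card_eq_sum_card_fiberwise (fun x _ => Finset.mem_univ (d x))
  rw [Fin.sum_univ_three, Finset.card_univ, Fintype.card_fin] at hfib
  omega

/-- extract a monochromatic (for pairs) subset of size m -/
lemma pairMono (m : ℕ) (c : ℕ → ℕ → Fin 3) (S : Finset ℕ) (hS : 3 ^ (3 * m) ≤ S.card) :
    ∃ T : Finset ℕ, T ⊆ S ∧ m ≤ T.card ∧
      ∃ t : Fin 3, ∀ x ∈ T, ∀ y ∈ T, x < y → c x y = t := by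
  obtain ⟨b, hbmono, hbmem, d, hd⟩ := pairChain (3 * m) c S hS
  obtain ⟨t0, ht0⟩ := pigeon3 m rfl d
  set I := Finset.univ.filter (fun i => d i = t0) with hI
  refine ⟨I.image b, ?_, ?_, t0, ?_⟩
  · intro x hx
    obtain ⟨i, -, rfl⟩ := Finset.mem_image.1 hx
    exact hbmem i
  · rw [Finset.card_image_of_injective _ hbmono.injective]
    exact ht0
  · intro x hx y hy hxy
    obtain ⟨i, hiI, rfl⟩ := Finset.mem_image.1 hx
    obtain ⟨j, hjI, rfl⟩ := Finset.mem_image.1 hy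
    have hij : i < j := hbmono.lt_iff_lt.1 hxy
    rw [hd i j hij]
    exact (Finset.mem_filter.1 hiI).2

lemma tripleChain (M : ℕ) : ∀ (c : ℕ → ℕ → ℕ → Fin 3) (S : Finset ℕ),
    rbound M ≤ S.card →
    ∃ b : Fin M → ℕ, StrictMono b ∧ (∀ i, b i ∈ S) ∧
      ∃ d : Fin M → Fin 3, ∀ i j l, i < j → j < l → c (b i) (b j) (b l) = d i := by
  induction M with
  | zero =>
    intro c S _
    exact ⟨Fin.elim0, fun i => i.elim0, fun i => i.elim0, Fin.elim0, fun i => i.elim0⟩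
  | succ M ih =>
    intro c S hS
    have hSne : S.Nonempty := by
      rw [← Finset.card_pos]
      have : 0 < rbound (M + 1) := by rw [rbound]; positivity
      omega
    set a := S.min' hSne with ha
    set S' := S.erase a with hS'
    have hcard : 3 ^ (3 * rbound M) ≤ S'.card := by
      rw [hS', Finset.card_erase_of_mem (S.min'_mem hSne)]
      have : rbound (M + 1) = 3 ^ (3 * rbound M) + 1 := rfl
      omega
    obtain ⟨T, hTS, hTcard, t0, hTmono⟩ := pairMono (rbound M) (fun y z => c a y z) S' hcard
    obtain ⟨b', hb'mono, hb'mem, d', hd'⟩ := ih c T hTcard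
    have hb'S : ∀ i, b' i ∈ S' := fun i => hTS (hb'mem i)
    have halt : ∀ i, a < b' i := by
      intro i
      have h1 : b' i ∈ S := Finset.mem_of_mem_erase (hb'S i)
      have h2 : b' i ≠ a := Finset.ne_of_mem_erase (hb'S i)
      exact lt_of_le_of_ne (S.min'_le _ h1) (Ne.symm h2)
    refine ⟨Fin.cases a b', ?_, ?_, Fin.cases t0 d', ?_⟩
    · intro i j hij
      rcases Fin.eq_zero_or_eq_succ j with rfl | ⟨j', rfl⟩
      · exact absurd hij (Fin.not_lt_zero i)
      · rcases Fin.eq_zero_or_eq_succ i with rfl | ⟨i', rfl⟩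
        · simpa using halt j'
        · simpa using hb'mono (Fin.succ_lt_succ_iff.1 hij)
    · intro i
      rcases Fin.eq_zero_or_eq_succ i with rfl | ⟨i', rfl⟩
      · simpa using S.min'_mem hSne
      · simpa using Finset.mem_of_mem_erase (hb'S i')
    · intro i j l hij hjl
      rcases Fin.eq_zero_or_eq_succ l with rfl | ⟨l', rfl⟩
      · exact absurd hjl (Fin.not_lt_zero j)
      · rcases Fin.eq_zero_or_eq_succ j with rfl | ⟨j', rfl⟩
        · exact absurd hij (Fin.not_lt_zero i)
        · rcases Fin.eq_zero_or_eq_succ i with rfl | ⟨i', rfl⟩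
          · have hlt : b' j' < b' l' := hb'mono (Fin.succ_lt_succ_iff.1 hjl)
            simpa using hTmono (b' j') (hb'mem j') (b' l') (hb'mem l') hlt
          · simpa using hd' i' j' l' (Fin.succ_lt_succ_iff.1 hij) (Fin.succ_lt_succ_iff.1 hjl)

theorem ramsey3 (k : ℕ) (c : ℕ → ℕ → ℕ → Fin 3) (S : Finset ℕ)
    (hS : rbound (3 * k) ≤ S.card) :
    ∃ b : Fin k → ℕ, StrictMono b ∧ (∀ i, b i ∈ S) ∧
      ∃ t : Fin 3, ∀ i j l : Fin k, i < j → j < l → c (b i) (b j) (b l) = t := by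
  obtain ⟨b, hbmono, hbmem, d, hd⟩ := tripleChain (3 * k) c S hS
  obtain ⟨t0, ht0⟩ := pigeon3 k rfl d
  set I := Finset.univ.filter (fun i => d i = t0) with hI
  obtain ⟨I', hI'sub, hI'card⟩ := Finset.exists_subset_card_eq ht0
  set g := I'.orderEmbOfFin hI'card with hg
  refine ⟨fun i => b (g i), ?_, fun i => hbmem _, t0, ?_⟩
  · exact hbmono.comp g.strictMono
  · intro i j l hij hjl
    rw [hd (g i) (g j) (g l) (g.strictMono hij) (g.strictMono hjl)]
    have : g i ∈ I := hI'sub (I'.orderEmbOfFin_mem hI'card i)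
    exact (Finset.mem_filter.1 this).2


lemma collinear_of_cross_zero {k : ℕ} (q : Fin k → ℝ × ℝ)
    (H : ∀ i j l : Fin k, i < j → j < l → cross (q i) (q j) (q l) = 0) :
    Collinear ℝ (Set.range q) := by
  rcases Nat.eq_zero_or_pos k with hk | hk
  · subst hk
    rw [Set.range_eq_empty]
    exact collinear_empty ℝ _
  set i0 : Fin k := ⟨0, hk⟩ with hi0
  by_cases hall : ∀ i, q i = q i0
  · have hsub : Set.range q ⊆ {q i0} := by
      rintro _ ⟨i, rfl⟩
      rw [hall i]
      rfl
    exact Collinear.subset hsub (collinear_singleton ℝ _)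
  · push_neg at hall
    obtain ⟨i1, hi1⟩ := hall
    have hi01 : i0 < i1 := by
      rw [Fin.lt_def]
      have : i1 ≠ i0 := fun h => hi1 (by rw [h])
      have : (i1 : ℕ) ≠ 0 := fun h => this (Fin.ext h)
      simp only [hi0]
      omega
    set A := q i0 with hA
    set B := q i1 with hB
    have hABne : A ≠ B := fun h => hi1 h.symm
    refine (collinear_iff_of_mem (show A ∈ Set.range q from ⟨i0, hA⟩)).2 ⟨B - A, ?_⟩
    rintro _ ⟨m, rfl⟩
    by_cases hm0 : m = i0
    · exact ⟨0, by rw [hm0]; simp [hA]⟩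
    by_cases hm1 : m = i1
    · exact ⟨1, by rw [hm1]; simp [hB]⟩
    have hm0' : i0 < m := by
      rw [Fin.lt_def]
      have : (m : ℕ) ≠ 0 := fun h => hm0 (Fin.ext h)
      simp only [hi0]
      omega
    have hcr : cross A B (q m) = 0 := by
      rcases lt_trichotomy m i1 with h | h | h
      · have := H i0 m i1 hm0' h
        rw [cross_swap]
        rw [this]
        ring
      · exact absurd h hm1
      · exact H i0 i1 m hi01 h
    obtain ⟨r, hr⟩ := exists_param_of_cross_eq_zero hABne hcr
    exact ⟨r, by rw [hr]; rfl⟩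

lemma collinear_small {k : ℕ} (hk : k ≤ 2) (q : Fin k → ℝ × ℝ) :
    Collinear ℝ (Set.range q) := by
  apply collinear_of_cross_zero
  intro i j l hij hjl
  exfalso
  have h1 := Fin.lt_def.1 hij
  have h2 := Fin.lt_def.1 hjl
  have := l.isLt
  omega

lemma isConvexPolygon_zero (q : Fin 0 → ℝ × ℝ) : IsConvexPolygon q := by
  rw [IsConvexPolygon]
  have h1 : polygonEdges q = ∅ := by
    rw [polygonEdges]
    exact Set.iUnion_of_empty _
  have h2 : Set.range q = ∅ := Set.range_eq_empty q
  rw [h1, h2, convexHull_empty, frontier_empty]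

lemma isConvexPolygon_swap {k : ℕ} (q : Fin k → ℝ × ℝ)
    (h : IsConvexPolygon (Prod.swap ∘ q)) : IsConvexPolygon q := by
  have hinj : Function.Injective (Prod.swap : ℝ × ℝ → ℝ × ℝ) := Prod.swap_injective
  set L : (ℝ × ℝ) →ₗ[ℝ] (ℝ × ℝ) := (LinearEquiv.prodComm ℝ ℝ ℝ).toLinearMap with hL
  have hLapp : ∀ x : ℝ × ℝ, L x = Prod.swap x := fun x => rfl
  have himseg : ∀ x y : ℝ × ℝ,
      segment ℝ (Prod.swap x) (Prod.swap y) = Prod.swap '' segment ℝ x y := by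
    intro x y
    have h1 := image_segment ℝ L.toAffineMap x y
    calc segment ℝ (Prod.swap x) (Prod.swap y) = segment ℝ (L.toAffineMap x) (L.toAffineMap y) := rfl
      _ = L.toAffineMap '' segment ℝ x y := h1.symm
      _ = Prod.swap '' segment ℝ x y := rfl
  have hedges : polygonEdges (Prod.swap ∘ q) = Prod.swap '' polygonEdges q := by
    rw [polygonEdges, polygonEdges, Set.image_iUnion]
    exact Set.iUnion_congr fun i => by
      rw [Function.comp_apply, Function.comp_apply, himseg]
  have hhull : convexHull ℝ (Set.range (Prod.swap ∘ q))
      = Prod.swap '' convexHull ℝ (Set.range q) := by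
    calc convexHull ℝ (Set.range (Prod.swap ∘ q))
        = convexHull ℝ (L '' Set.range q) := by rw [Set.range_comp]; rfl
      _ = L '' convexHull ℝ (Set.range q) := (L.image_convexHull _).symm
      _ = Prod.swap '' convexHull ℝ (Set.range q) := rfl
  have hfr : frontier (convexHull ℝ (Set.range (Prod.swap ∘ q)))
      = Prod.swap '' frontier (convexHull ℝ (Set.range q)) := by
    rw [hhull]
    exact ((Homeomorph.prodComm ℝ ℝ).image_frontier _).symm
  rw [IsConvexPolygon] at h ⊢
  rw [hedges, hfr] at h
  exact Set.image_injective.2 hinj h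

def col (A B C : ℝ × ℝ) : Fin 3 :=
  if cross A B C = 0 then 0 else if 0 < cross A B C then 1 else 2

lemma col_eq_zero {A B C : ℝ × ℝ} (h : col A B C = 0) : cross A B C = 0 := by
  rw [col] at h
  split_ifs at h with h1 h2
  · exact h1
  · exact absurd h (by decide)
  · exact absurd h (by decide)

lemma col_eq_one {A B C : ℝ × ℝ} (h : col A B C = 1) : 0 < cross A B C := by
  rw [col] at h
  split_ifs at h with h1 h2
  · exact absurd h (by decide)
  · exact h2
  · exact absurd h (by decide)

lemma col_eq_two {A B C : ℝ × ℝ} (h : col A B C = 2) : cross A B C < 0 := by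
  rw [col] at h
  split_ifs at h with h1 h2
  · exact absurd h (by decide)
  · exact absurd h (by decide)
  · exact lt_of_le_of_ne (not_lt.1 h2) h1

end SubPoly
end

open SubPoly

/-- For every natural number `k` there is a natural number `F k` such that every
`n`-gon `P` in the plane with `n ≥ F k` has a convex sub-`k`-gon (no strictness
assumption on `P`). -/
theorem exists_bound_convex_subpolygon :
    ∃ F : ℕ → ℕ, ∀ (k n : ℕ) (P : Fin n → ℝ × ℝ), F k ≤ n →
      ∃ e : Fin k → Fin n, StrictMono e ∧ IsConvexPolygon (P ∘ e) := by
  classical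
  refine ⟨fun k => rbound (3 * k), ?_⟩
  intro k n P hn
  set c : ℕ → ℕ → ℕ → Fin 3 := fun i j l =>
    if h : i < n ∧ j < n ∧ l < n then col (P ⟨i, h.1⟩) (P ⟨j, h.2.1⟩) (P ⟨l, h.2.2⟩) else 0
    with hcdef
  obtain ⟨b, hbmono, hbmem, t, ht⟩ := ramsey3 k c (Finset.range n)
    (by rw [Finset.card_range]; exact hn)
  have hblt : ∀ i, b i < n := fun i => Finset.mem_range.1 (hbmem i)
  set e : Fin k → Fin n := fun i => ⟨b i, hblt i⟩ with he
  have hemono : StrictMono e := by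
    intro i j hij
    rw [Fin.lt_def]
    exact hbmono hij
  refine ⟨e, hemono, ?_⟩
  set q : Fin k → ℝ × ℝ := P ∘ e with hq
  have hcol : ∀ i j l : Fin k, i < j → j < l → col (q i) (q j) (q l) = t := by
    intro i j l hij hjl
    have hthis := ht i j l hij hjl
    have hcond : b i < n ∧ b j < n ∧ b l < n := ⟨hblt i, hblt j, hblt l⟩
    rw [hcdef] at hthis
    simp only [dif_pos hcond] at hthis
    exact hthis
  by_cases hk0 : k = 0
  · subst hk0
    exact isConvexPolygon_zero q
  have hkpos : 0 < k := Nat.pos_of_ne_zero hk0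
  by_cases hk2 : k ≤ 2
  · exact isConvexPolygon_of_collinear hkpos q (collinear_small hk2 q)
  push_neg at hk2
  fin_cases t
  · apply isConvexPolygon_of_collinear hkpos q
    apply collinear_of_cross_zero
    intro i j l hij hjl
    exact col_eq_zero (hcol i j l hij hjl)
  · apply isConvexPolygon_of_strict (by omega) q
    intro i j l hij hjl
    exact col_eq_one (hcol i j l hij hjl)
  · apply isConvexPolygon_swap
    apply isConvexPolygon_of_strict (by omega)
    intro i j l hij hjl
    have hlt := col_eq_two (hcol i j l hij hjl)
    have hsw := cross_swap_pts (q i) (q j) (q l)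
    show 0 < cross (Prod.swap (q i)) (Prod.swap (q j)) (Prod.swap (q l))
    rw [hsw]
    linarith
end

section
/- A strict n-gon P = (V_0, …, V_{n−1}) with n ≥ 4 is convex if and only if sign Δ_{i−1,i,i+1} = sign Δ_{0,j,j+1} = sign Δ_{0,1,k+1} for all i and k in {2, …, n−2} and all j in {1, …, n−2}. -/
/-- The determinant `Δ_{i,j,k}` of the polygon `P`, where `P r = (x_r, y_r)`. -/
def polyDet {n : ℕ} (P : Fin n → ℝ × ℝ) (i j k : Fin n) : ℝ :=
  Matrix.det !![1, (P i).1, (P i).2; 1, (P j).1, (P j).2; 1, (P k).1, (P k).2]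

noncomputable section PolyAux

def dd (a b c : ℝ × ℝ) : ℝ := (b.1 - a.1) * (c.2 - a.2) - (b.2 - a.2) * (c.1 - a.1)

lemma polyDet_eq_dd {n : ℕ} (P : Fin n → ℝ × ℝ) (i j k : Fin n) :
    polyDet P i j k = dd (P i) (P j) (P k) := by
  simp [polyDet, Matrix.det_fin_three, dd, Matrix.vecHead, Matrix.vecTail]; ring

lemma dd_cyclic (a b c : ℝ × ℝ) : dd b c a = dd a b c := by simp [dd]; ring
lemma dd_swap (a b c : ℝ × ℝ) : dd b a c = - dd a b c := by simp [dd]; ring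
lemma dd_swap23 (a b c : ℝ × ℝ) : dd a c b = - dd a b c := by simp [dd]; ring

lemma dd_rev (a b c : ℝ × ℝ) : dd c b a = - dd a b c := by simp [dd]; ring

lemma dd_plucker (t s a b c : ℝ × ℝ) :
    dd t a c * dd t s b = dd t a b * dd t s c + dd t b c * dd t s a := by
  simp only [dd]; ring

lemma dd_trans (t s a b c : ℝ × ℝ)
    (hab : 0 < dd t s a * dd t s b) (hbc : 0 < dd t s b * dd t s c)
    (h1 : 0 < dd t a b) (h2 : 0 < dd t b c) : 0 < dd t a c := by
  have key := dd_plucker t s a b c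
  rcases lt_trichotomy (dd t s b) 0 with h | h | h
  · have ha : dd t s a < 0 := by nlinarith
    have hc : dd t s c < 0 := by nlinarith
    have hlt : dd t a c * dd t s b < 0 := by nlinarith [mul_pos h1 (neg_pos.2 hc), mul_pos h2 (neg_pos.2 ha)]
    by_contra hle
    push_neg at hle
    nlinarith
  · rw [h] at hab; nlinarith
  · have ha : 0 < dd t s a := by nlinarith
    have hc : 0 < dd t s c := by nlinarith
    have hlt : 0 < dd t a c * dd t s b := by nlinarith [mul_pos h1 hc, mul_pos h2 ha]
    by_contra hle
    push_neg at hle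
    nlinarith

lemma collinear_iff_dd {a b c : ℝ × ℝ} :
    Collinear ℝ ({a, b, c} : Set (ℝ × ℝ)) ↔ dd a b c = 0 := by
  constructor
  · intro h
    rw [collinear_iff_of_mem (Set.mem_insert a _)] at h
    obtain ⟨v, hv⟩ := h
    obtain ⟨tb, htb⟩ := hv b (by simp)
    obtain ⟨tc, htc⟩ := hv c (by simp)
    have hb1 : b.1 = tb * v.1 + a.1 := by rw [htb]; simp
    have hb2 : b.2 = tb * v.2 + a.2 := by rw [htb]; simp
    have hc1 : c.1 = tc * v.1 + a.1 := by rw [htc]; simp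
    have hc2 : c.2 = tc * v.2 + a.2 := by rw [htc]; simp
    simp [dd, hb1, hb2, hc1, hc2]; ring
  · intro h
    by_cases hab : b = a
    · subst hab
      exact (collinear_pair ℝ b c).subset
        (by intro x hx; simp only [Set.mem_insert_iff, Set.mem_singleton_iff] at hx ⊢; tauto)
    · rw [collinear_iff_of_mem (Set.mem_insert a _)]
      refine ⟨b - a, fun p hp => ?_⟩
      simp only [Set.mem_insert_iff, Set.mem_singleton_iff] at hp
      rcases hp with rfl | rfl | rfl
      · exact ⟨0, by simp⟩
      · exact ⟨1, by simp⟩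
      · by_cases h1 : b.1 - a.1 ≠ 0
        · refine ⟨(p.1 - a.1) / (b.1 - a.1), ?_⟩
          have h2 : p.2 - a.2 = (p.1 - a.1) / (b.1 - a.1) * (b.2 - a.2) := by
            field_simp
            simp only [dd] at h; nlinarith
          apply Prod.ext <;>
            simp only [vadd_eq_add, Prod.fst_add, Prod.snd_add, Prod.smul_fst, Prod.smul_snd,
              Prod.fst_sub, Prod.snd_sub, smul_eq_mul]
          · field_simp; ring
          · linarith [h2]
        · push_neg at h1
          have h2 : b.2 - a.2 ≠ 0 := by
            intro h2
            apply hab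
            apply Prod.ext
            · linarith
            · linarith
          refine ⟨(p.2 - a.2) / (b.2 - a.2), ?_⟩
          have h3 : p.1 - a.1 = 0 := by
            simp only [dd, h1] at h
            have h4 : (b.2 - a.2) * (p.1 - a.1) = 0 := by linarith
            rcases mul_eq_zero.mp h4 with h5 | h5
            · exact absurd h5 h2
            · exact h5
          apply Prod.ext <;>
            simp only [vadd_eq_add, Prod.fst_add, Prod.snd_add, Prod.smul_fst, Prod.smul_snd,
              Prod.fst_sub, Prod.snd_sub, smul_eq_mul, h1]
          · linarith
          · field_simp; ring

lemma dd_sum_coords (a b c x : ℝ × ℝ) : dd x b c + dd a x c + dd a b x = dd a b c := by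
  simp only [dd]; ring

lemma dd_combo_fst (a b c x : ℝ × ℝ) :
    dd x b c * a.1 + dd a x c * b.1 + dd a b x * c.1 = dd a b c * x.1 := by
  simp only [dd]; ring

lemma dd_combo_snd (a b c x : ℝ × ℝ) :
    dd x b c * a.2 + dd a x c * b.2 + dd a b x * c.2 = dd a b c * x.2 := by
  simp only [dd]; ring

lemma combo_mem_convexHull (a b c x : ℝ × ℝ) (wa wb wc : ℝ) (h0a : 0 ≤ wa) (h0b : 0 ≤ wb)
    (h0c : 0 ≤ wc) (hs : wa + wb + wc = 1) (hx : x = wa • a + wb • b + wc • c) :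
    x ∈ convexHull ℝ ({a, b, c} : Set (ℝ × ℝ)) := by
  have := Finset.centerMass_mem_convexHull (t := (Finset.univ : Finset (Fin 3)))
    (w := ![wa, wb, wc]) (z := ![a, b, c]) (s := ({a, b, c} : Set (ℝ × ℝ)))
    (by intro i _; fin_cases i <;> simpa) (by simp [Fin.sum_univ_three, hs])
    (by intro i _; fin_cases i <;> simp)
  convert this using 1
  simp [Finset.centerMass, Fin.sum_univ_three, hs, hx]

lemma mem_triangle {a b c : ℝ × ℝ} (hD : dd a b c ≠ 0) {x : ℝ × ℝ}
    (h1 : 0 ≤ dd x b c / dd a b c) (h2 : 0 ≤ dd a x c / dd a b c)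
    (h3 : 0 ≤ dd a b x / dd a b c) :
    x ∈ convexHull ℝ ({a, b, c} : Set (ℝ × ℝ)) := by
  apply combo_mem_convexHull a b c x _ _ _ h1 h2 h3
  · field_simp
    exact dd_sum_coords a b c x
  · apply Prod.ext <;>
      simp only [Prod.fst_add, Prod.snd_add, Prod.smul_fst, Prod.smul_snd, smul_eq_mul]
    · field_simp
      linarith [dd_combo_fst a b c x]
    · field_simp
      linarith [dd_combo_snd a b c x]

lemma mem_interior_triangle {a b c : ℝ × ℝ} (hD : dd a b c ≠ 0) {x : ℝ × ℝ}
    (h1 : 0 < dd x b c / dd a b c) (h2 : 0 < dd a x c / dd a b c)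
    (h3 : 0 < dd a b x / dd a b c) :
    x ∈ interior (convexHull ℝ ({a, b, c} : Set (ℝ × ℝ))) := by
  have c1 : Continuous (fun y : ℝ × ℝ => dd y b c / dd a b c) := by
    unfold dd; fun_prop
  have c2 : Continuous (fun y : ℝ × ℝ => dd a y c / dd a b c) := by
    unfold dd; fun_prop
  have c3 : Continuous (fun y : ℝ × ℝ => dd a b y / dd a b c) := by
    unfold dd; fun_prop
  have hU : IsOpen {y : ℝ × ℝ | 0 < dd y b c / dd a b c ∧ 0 < dd a y c / dd a b c ∧
      0 < dd a b y / dd a b c} := by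
    refine IsOpen.inter (isOpen_lt continuous_const c1) (IsOpen.inter ?_ ?_) <;>
      [exact isOpen_lt continuous_const c2; exact isOpen_lt continuous_const c3]
  refine interior_maximal ?_ hU ⟨h1, h2, h3⟩
  rintro y ⟨hy1, hy2, hy3⟩
  exact mem_triangle hD hy1.le hy2.le hy3.le

lemma allPos_of_signs {n : ℕ} (hn : 4 ≤ n) (W : ℕ → ℝ × ℝ)
    (H1 : ∀ i, 2 ≤ i → i ≤ n - 2 → 0 < dd (W (i - 1)) (W i) (W (i + 1)))
    (H2 : ∀ j, 1 ≤ j → j ≤ n - 2 → 0 < dd (W 0) (W j) (W (j + 1)))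
    (H3 : ∀ m, 2 ≤ m → m ≤ n - 1 → 0 < dd (W 0) (W 1) (W m)) :
    ∀ a b c, a < b → b < c → c ≤ n - 1 → 0 < dd (W a) (W b) (W c) := by
  -- Claim A : fan from vertex 0
  have A : ∀ k, k ≤ n - 1 → ∀ j, 1 ≤ j → j < k → 0 < dd (W 0) (W j) (W k) := by
    intro k
    induction k with
    | zero => omega
    | succ k ih =>
      intro hk j hj1 hjk
      rcases Nat.lt_succ_iff_lt_or_eq.mp hjk with hjk' | rfl
      · -- j < k
        rcases Nat.lt_or_ge j 2 with hj2 | hj2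
        · -- j = 1
          have : j = 1 := by omega
          subst this
          exact H3 (k + 1) (by omega) (by omega)
        · refine dd_trans (W 0) (W 1) (W j) (W k) (W (k + 1)) ?_ ?_ ?_ ?_
          · exact mul_pos (H3 j (by omega) (by omega)) (H3 k (by omega) (by omega))
          · exact mul_pos (H3 k (by omega) (by omega)) (H3 (k + 1) (by omega) (by omega))
          · exact ih (by omega) j hj1 hjk'
          · exact H2 k (by omega) (by omega)
      · exact H2 j hj1 (by omega)
  -- Claim C : all triangles on a polygon edge (b, b+1)
  have C : ∀ b, 1 ≤ b → b ≤ n - 2 → ∀ a, a < b → 0 < dd (W a) (W b) (W (b + 1)) := by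
    intro b
    induction b with
    | zero => omega
    | succ b ih =>
      intro hb1 hb2 a ha
      by_cases hb0 : b = 0
      · subst hb0
        have : a = 0 := by omega
        subst this
        exact H2 1 (by omega) (by omega)
      · rcases Nat.lt_succ_iff_lt_or_eq.mp ha with ha' | rfl
        · by_cases ha0 : a = 0
          · subst ha0; exact H2 (b + 1) (by omega) (by omega)
          · -- 0 < a < b
            have key : 0 < dd (W (b + 1)) (W (b + 2)) (W a) := by
              refine dd_trans (W (b + 1)) (W b) (W (b + 2)) (W 0) (W a) ?_ ?_ ?_ ?_
              · have e1 : dd (W (b+1)) (W b) (W (b+2)) = - dd (W b) (W (b+1)) (W (b+2)) := by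
                  rw [dd_swap]
                have e2 : dd (W (b+1)) (W b) (W 0) = - dd (W 0) (W b) (W (b+1)) := dd_rev _ _ _
                have p1 : 0 < dd (W b) (W (b+1)) (W (b+2)) := by
                  have := H1 (b + 1) (by omega) (by omega)
                  simpa using this
                have p2 := H2 b (by omega) (by omega)
                rw [e1, e2]
                exact mul_pos_of_neg_of_neg (by linarith) (by linarith)
              · have e2 : dd (W (b+1)) (W b) (W 0) = - dd (W 0) (W b) (W (b+1)) := dd_rev _ _ _
                have e3 : dd (W (b+1)) (W b) (W a) = - dd (W a) (W b) (W (b+1)) := dd_rev _ _ _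
                have p2 := H2 b (by omega) (by omega)
                have p3 := ih (by omega) (by omega) a ha'
                rw [e2, e3]
                exact mul_pos_of_neg_of_neg (by linarith) (by linarith)
              · -- dd (W (b+1)) (W (b+2)) (W 0) = dd (W 0) (W (b+1)) (W (b+2))
                rw [dd_cyclic]
                exact H2 (b + 1) (by omega) (by omega)
              · -- dd (W (b+1)) (W 0) (W a) = dd (W 0) (W a) (W (b+1))
                rw [← dd_cyclic (W (b + 1)) (W 0) (W a)]
                exact A (b + 1) (by omega) a (by omega) (by omega)
            rw [← dd_cyclic]
            exact key
        · -- a = b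
          have := H1 (a + 1) (by omega) (by omega)
          simpa using this
  -- Claim D : everything
  have D : ∀ c, c ≤ n - 1 → ∀ a b, a < b → b < c → 0 < dd (W a) (W b) (W c) := by
    intro c
    induction c with
    | zero => omega
    | succ c ih =>
      intro hc a b hab hbc
      rcases Nat.lt_succ_iff_lt_or_eq.mp hbc with hbc' | rfl
      · by_cases ha0 : a = 0
        · subst ha0
          by_cases hb1 : b = 1
          · subst hb1; exact H3 (c + 1) (by omega) (by omega)
          · refine dd_trans (W 0) (W 1) (W b) (W c) (W (c + 1)) ?_ ?_ ?_ ?_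
            · exact mul_pos (H3 b (by omega) (by omega)) (H3 c (by omega) (by omega))
            · exact mul_pos (H3 c (by omega) (by omega)) (H3 (c + 1) (by omega) (by omega))
            · exact ih (by omega) 0 b (by omega) hbc'
            · exact H2 c (by omega) (by omega)
        · refine dd_trans (W a) (W 0) (W b) (W c) (W (c + 1)) ?_ ?_ ?_ ?_
          · have eb : dd (W a) (W 0) (W b) = - dd (W 0) (W a) (W b) := by rw [dd_swap]
            have ec : dd (W a) (W 0) (W c) = - dd (W 0) (W a) (W c) := by rw [dd_swap]
            have pb := A b (by omega) a (by omega) hab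
            have pc := A c (by omega) a (by omega) (by omega)
            rw [eb, ec]; exact mul_pos_of_neg_of_neg (by linarith) (by linarith)
          · have ec : dd (W a) (W 0) (W c) = - dd (W 0) (W a) (W c) := by rw [dd_swap]
            have ec1 : dd (W a) (W 0) (W (c+1)) = - dd (W 0) (W a) (W (c+1)) := by rw [dd_swap]
            have pc := A c (by omega) a (by omega) (by omega)
            have pc1 := A (c + 1) (by omega) a (by omega) (by omega)
            rw [ec, ec1]; exact mul_pos_of_neg_of_neg (by linarith) (by linarith)
          · exact ih (by omega) a b hab hbc'
          · exact C c (by omega) (by omega) a (by omega)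
      · exact C b (by omega) (by omega) a hab
  intro a b c hab hbc hc
  exact D c hc a b hab hbc

lemma dd_self_left (a b : ℝ × ℝ) : dd a b a = 0 := by simp [dd]
lemma dd_self_right (a b : ℝ × ℝ) : dd a b b = 0 := by simp [dd]; ring

lemma dd_affine (a b u v : ℝ × ℝ) (σ τ : ℝ) (h : σ + τ = 1) :
    dd a b (σ • u + τ • v) = σ * dd a b u + τ * dd a b v := by
  have hτ : τ = 1 - σ := by linarith
  subst hτ; simp [dd]; ring

lemma dd_add_vec (a b x w : ℝ × ℝ) :
    dd a b (x + w) = dd a b x + ((b.1 - a.1) * w.2 - (b.2 - a.2) * w.1) := by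
  simp [dd]; ring

lemma dd_combo_eq {a b c : ℝ × ℝ} (hD : dd a b c ≠ 0) (x : ℝ × ℝ) :
    x = (dd x b c / dd a b c) • a + (dd a x c / dd a b c) • b + (dd a b x / dd a b c) • c := by
  apply Prod.ext <;>
    simp only [Prod.fst_add, Prod.snd_add, Prod.smul_fst, Prod.smul_snd, smul_eq_mul] <;>
    field_simp
  · linarith [dd_combo_fst a b c x]
  · linarith [dd_combo_snd a b c x]

lemma convexHull_subset_halfplane {s : Set (ℝ × ℝ)} {a b : ℝ × ℝ}
    (h : ∀ x ∈ s, 0 ≤ dd a b x) : ∀ x ∈ convexHull ℝ s, 0 ≤ dd a b x := by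
  intro x hx
  have hconv : Convex ℝ {y : ℝ × ℝ | 0 ≤ dd a b y} := by
    intro u hu v hv σ τ hσ hτ hστ
    simp only [Set.mem_setOf_eq] at *
    rw [dd_affine a b u v σ τ hστ]
    exact add_nonneg (mul_nonneg hσ hu) (mul_nonneg hτ hv)
  exact convexHull_min h hconv hx

lemma IsStrictPolygon.dd_ne {n : ℕ} {P : Fin n → ℝ × ℝ} (hP : IsStrictPolygon P)
    {i j k : Fin n} (hij : i ≠ j) (hik : i ≠ k) (hjk : j ≠ k) :
    dd (P i) (P j) (P k) ≠ 0 :=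
  fun h => hP i j k hij hik hjk (collinear_iff_dd.mpr h)

lemma IsStrictPolygon.inj {n : ℕ} (hn : 3 ≤ n) {P : Fin n → ℝ × ℝ} (hP : IsStrictPolygon P) :
    Function.Injective P := by
  intro i j hij
  by_contra hne
  have hex : ∃ k : Fin n, k ≠ i ∧ k ≠ j := by
    by_contra hc
    push_neg at hc
    have d : ∀ m : Fin n, m = i ∨ m = j := by
      intro m
      by_cases h : m = i
      · exact Or.inl h
      · exact Or.inr (hc m h)
    have d0 := d ⟨0, by omega⟩
    have d1 := d ⟨1, by omega⟩
    have d2 := d ⟨2, by omega⟩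
    rcases d0 with h0 | h0 <;> rcases d1 with h1 | h1 <;> rcases d2 with h2 | h2 <;>
      first
        | (have v0 := congrArg Fin.val h0; have v1 := congrArg Fin.val h1;
           simp only at v0 v1; omega)
        | (have v0 := congrArg Fin.val h0; have v2 := congrArg Fin.val h2;
           simp only at v0 v2; omega)
        | (have v1 := congrArg Fin.val h1; have v2 := congrArg Fin.val h2;
           simp only at v1 v2; omega)
  obtain ⟨k, hki, hkj⟩ := hex
  refine hP i j k hne (Ne.symm hki) (Ne.symm hkj) ?_
  refine (collinear_pair ℝ (P j) (P k)).subset ?_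
  intro x hx
  simp only [Set.mem_insert_iff, Set.mem_singleton_iff] at hx ⊢
  rcases hx with h | h | h
  · rw [h, hij]; tauto
  · tauto
  · tauto

lemma centroid_mem_interior_triangle {a b c : ℝ × ℝ} (hD : dd a b c ≠ 0) :
    ((1:ℝ)/3) • (a + b + c) ∈ interior (convexHull ℝ ({a, b, c} : Set (ℝ × ℝ))) := by
  set z := ((1:ℝ)/3) • (a + b + c) with hz
  have h1 : dd z b c = dd a b c / 3 := by simp [hz, dd]; ring
  have h2 : dd a z c = dd a b c / 3 := by simp [hz, dd]; ring
  have h3 : dd a b z = dd a b c / 3 := by simp [hz, dd]; ring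
  have e : dd a b c / 3 / dd a b c = 1 / 3 := by field_simp
  refine mem_interior_triangle hD ?_ ?_ ?_
  · rw [h1, e]; norm_num
  · rw [h2, e]; norm_num
  · rw [h3, e]; norm_num

lemma interior_hull_nonempty {n : ℕ} (hn : 4 ≤ n) (P : Fin n → ℝ × ℝ)
    (hP : IsStrictPolygon P) :
    ∃ z, z ∈ interior (convexHull ℝ (Set.range P)) := by
  have h01 : (⟨0, by omega⟩ : Fin n) ≠ ⟨1, by omega⟩ := by intro h; simpa using congrArg Fin.val h
  have h02 : (⟨0, by omega⟩ : Fin n) ≠ ⟨2, by omega⟩ := by intro h; simpa using congrArg Fin.val h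
  have h12 : (⟨1, by omega⟩ : Fin n) ≠ ⟨2, by omega⟩ := by intro h; simpa using congrArg Fin.val h
  have hD := hP.dd_ne h01 h02 h12
  refine ⟨_, interior_mono (convexHull_mono ?_) (centroid_mem_interior_triangle hD)⟩
  intro x hx
  simp only [Set.mem_insert_iff, Set.mem_singleton_iff] at hx
  rcases hx with h | h | h <;> exact ⟨_, h.symm⟩

lemma le_on_hull {K : Set (ℝ × ℝ)} (hK : Convex ℝ K) (f : (ℝ × ℝ) →L[ℝ] ℝ) {p z : ℝ × ℝ}
    (hz : z ∈ interior K) (hf : ∀ a ∈ interior K, f a < f p) : ∀ y ∈ K, f y ≤ f p := by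
  intro y hy
  by_contra hgt; push_neg at hgt
  have hzp : f z < f p := hf z hz
  set t := (f p - f z) / (f y - f z) with hts
  have hyz : 0 < f y - f z := by linarith
  have ht0 : 0 < t := div_pos (by linarith) hyz
  have ht1 : t < 1 := (div_lt_one hyz).mpr (by linarith)
  have hmem : t • y + (1 - t) • z ∈ interior K :=
    hK.openSegment_self_interior_subset_interior hy hz ⟨t, 1 - t, ht0, by linarith, by ring, rfl⟩
  have hval : f (t • y + (1 - t) • z) = f z + t * (f y - f z) := by
    simp [map_add, map_smul]; ring
  have hcan : t * (f y - f z) = f p - f z := div_mul_cancel₀ _ (ne_of_gt hyz)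
  have := hf _ hmem
  rw [hval, hcan] at this
  linarith

lemma aux_edge {n : ℕ} (hn : 4 ≤ n) (P : Fin n → ℝ × ℝ)
    (hAP : ∀ a b c : Fin n, a < b → b < c → 0 < dd (P a) (P b) (P c))
    (f : (ℝ × ℝ) →L[ℝ] ℝ) (c : ℝ) (i j : Fin n) (hij : i < j)
    (hfi : f (P i) = c) (hfj : f (P j) = c)
    (hout : ∀ k, k ≠ i → k ≠ j → f (P k) < c)
    {p : ℝ × ℝ} (hp : p ∈ segment ℝ (P i) (P j)) : p ∈ polygonEdges P := by
  have hijv : i.1 < j.1 := hij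
  have hjn : j.1 < n := j.2
  by_cases hcons : j.1 = i.1 + 1
  · refine Set.mem_iUnion.mpr ⟨i, ?_⟩
    have hje : (⟨(i.1 + 1) % n, Nat.mod_lt _ i.pos⟩ : Fin n) = j := by
      apply Fin.ext
      simp only
      rw [Nat.mod_eq_of_lt (by omega)]
      omega
    rw [hje]
    exact hp
  · by_cases hwrap : i.1 = 0 ∧ j.1 = n - 1
    · refine Set.mem_iUnion.mpr ⟨j, ?_⟩
      obtain ⟨hw1, hw2⟩ := hwrap
      have hje : (⟨(j.1 + 1) % n, Nat.mod_lt _ j.pos⟩ : Fin n) = i := by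
        apply Fin.ext
        simp only
        have hjn1 : j.1 + 1 = n := by omega
        rw [hjn1, Nat.mod_self]
        omega
      rw [hje, segment_symm]
      exact hp
    · exfalso
      -- a vertex strictly between i and j, and one strictly outside
      set k : Fin n := ⟨i.1 + 1, by omega⟩ with hk
      have hik : i < k := by
        rw [Fin.lt_def]; exact Nat.lt_succ_self _
      have hkj : k < j := by rw [Fin.lt_def]; simp only [hk]; omega
      have hkne_i : k ≠ i := by intro h; have hh := congrArg Fin.val h; simp only [hk] at hh; omega
      have hkne_j : k ≠ j := ne_of_lt hkj
      have hgk : dd (P i) (P j) (P k) < 0 := by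
        have := hAP i k j hik hkj
        rw [dd_swap23]
        linarith
      obtain ⟨l, hlne_i, hlne_j, hgl⟩ :
          ∃ l : Fin n, l ≠ i ∧ l ≠ j ∧ 0 < dd (P i) (P j) (P l) := by
        by_cases hi0 : i.1 = 0
        · refine ⟨⟨j.1 + 1, by omega⟩, ?_, ?_, ?_⟩
          · intro h; have hh := congrArg Fin.val h; simp only at hh; omega
          · intro h; have hh := congrArg Fin.val h; simp only at hh; omega
          · exact hAP i j ⟨j.1 + 1, by omega⟩ hij (by rw [Fin.lt_def]; exact Nat.lt_succ_self _)
        · refine ⟨⟨0, by omega⟩, ?_, ?_, ?_⟩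
          · intro h; have hh := congrArg Fin.val h; simp only at hh; omega
          · intro h; have hh := congrArg Fin.val h; simp only at hh; omega
          · have := hAP ⟨0, by omega⟩ i j (by rw [Fin.lt_def]; simp only; omega) hij
            rw [dd_cyclic (P ⟨0, by omega⟩) (P i) (P j)]
            exact this
      -- the point where segment [P k, P l] crosses the line through P i, P j
      set θ : ℝ := dd (P i) (P j) (P l) / (dd (P i) (P j) (P l) - dd (P i) (P j) (P k)) with hθ
      have hden : 0 < dd (P i) (P j) (P l) - dd (P i) (P j) (P k) := by linarith
      have hθ0 : 0 < θ := div_pos hgl hden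
      have hθ1 : θ < 1 := by
        rw [hθ, div_lt_one hden]
        linarith
      set q : ℝ × ℝ := θ • (P k) + (1 - θ) • (P l) with hq
      have hq0 : dd (P i) (P j) q = 0 := by
        rw [hq, dd_affine _ _ _ _ _ _ (by ring)]
        rw [hθ]
        field_simp
        ring
      have hfq_lt : f q < c := by
        have h1 := hout k hkne_i hkne_j
        have h2 := hout l hlne_i hlne_j
        have : f q = θ * f (P k) + (1 - θ) * f (P l) := by simp [hq, map_add, map_smul]
        rw [this]
        nlinarith [mul_lt_mul_of_pos_left h1 hθ0,
          mul_lt_mul_of_pos_left h2 (by linarith : (0:ℝ) < 1 - θ)]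
      have hfq_eq : f q = c := by
        have hgkne : dd (P i) (P j) (P k) ≠ 0 := ne_of_lt hgk
        have e := dd_combo_eq hgkne q
        have hsum := dd_sum_coords (P i) (P j) (P k) q
        rw [hq0] at hsum
        have : f q = (dd q (P j) (P k) / dd (P i) (P j) (P k)) * c +
            (dd (P i) q (P k) / dd (P i) (P j) (P k)) * c := by
          conv_lhs => rw [e]
          simp [map_add, map_smul, hfi, hfj, hq0]
        rw [this]
        have hsum' : dd q (P j) (P k) + dd (P i) q (P k) = dd (P i) (P j) (P k) := by linarith
        field_simp
        linear_combination c * hsum'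
      linarith

lemma convex_of_allPos {n : ℕ} (hn : 4 ≤ n) (P : Fin n → ℝ × ℝ) (hP : IsStrictPolygon P)
    (hAP : ∀ a b c : Fin n, a < b → b < c → 0 < dd (P a) (P b) (P c)) :
    IsConvexPolygon P := by
  have hinj : Function.Injective P := hP.inj (by omega)
  have hKconv : Convex ℝ (convexHull ℝ (Set.range P)) := convex_convexHull ℝ _
  have hKclosed : IsClosed (convexHull ℝ (Set.range P)) :=
    (Set.finite_range P).isClosed_convexHull (𝕜 := ℝ)
  obtain ⟨z, hz⟩ := interior_hull_nonempty hn P hP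
  have edgepos : ∀ i k : Fin n, k ≠ i → k ≠ ⟨(i.1 + 1) % n, Nat.mod_lt _ i.pos⟩ →
      0 < dd (P i) (P ⟨(i.1 + 1) % n, Nat.mod_lt _ i.pos⟩) (P k) := by
    intro i k hki hki'
    have hkvi : k.1 ≠ i.1 := fun h => hki (Fin.ext h)
    have hkvi' : k.1 ≠ (i.1 + 1) % n := fun h => hki' (Fin.ext h)
    by_cases hlast : i.1 + 1 = n
    · have hmod : (i.1 + 1) % n = 0 := by rw [hlast, Nat.mod_self]
      have h1 : (⟨(i.1 + 1) % n, Nat.mod_lt _ i.pos⟩ : Fin n) < k := by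
        rw [Fin.lt_def]; simp only [hmod]; omega
      have h2 : k < i := by rw [Fin.lt_def]; omega
      have := hAP _ k i h1 h2
      rw [← dd_cyclic (P i) (P ⟨(i.1 + 1) % n, Nat.mod_lt _ i.pos⟩) (P k)]
      exact this
    · have hmod : (i.1 + 1) % n = i.1 + 1 := Nat.mod_eq_of_lt (by omega)
      rcases Nat.lt_or_ge k.1 i.1 with hk | hk
      · have h1 : k < i := by rw [Fin.lt_def]; omega
        have h2 : i < (⟨(i.1 + 1) % n, Nat.mod_lt _ i.pos⟩ : Fin n) := by
          rw [Fin.lt_def]; simp only [hmod]; omega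
        rw [dd_cyclic]
        exact hAP k i _ h1 h2
      · have h1 : i < (⟨(i.1 + 1) % n, Nat.mod_lt _ i.pos⟩ : Fin n) := by
          rw [Fin.lt_def]; simp only [hmod]; omega
        have h2 : (⟨(i.1 + 1) % n, Nat.mod_lt _ i.pos⟩ : Fin n) < k := by
          rw [Fin.lt_def]; simp only [hmod]; omega
        exact hAP i _ k h1 h2
  have hsub1 : polygonEdges P ⊆ frontier (convexHull ℝ (Set.range P)) := by
    intro x hx
    obtain ⟨i, hxi⟩ := Set.mem_iUnion.mp hx
    set i' : Fin n := ⟨(i.1 + 1) % n, Nat.mod_lt _ i.pos⟩ with hi'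
    have hii' : i ≠ i' := by
      intro h
      have hv := congrArg Fin.val h
      simp only [hi'] at hv
      by_cases hlast : i.1 + 1 = n
      · rw [hlast, Nat.mod_self] at hv; omega
      · rw [Nat.mod_eq_of_lt (by omega)] at hv; omega
    have hPne : P i ≠ P i' := fun h => hii' (hinj h)
    have hxK : x ∈ convexHull ℝ (Set.range P) :=
      segment_subset_convexHull (Set.mem_range_self i) (Set.mem_range_self i') hxi
    have hg0 : ∀ y ∈ convexHull ℝ (Set.range P), 0 ≤ dd (P i) (P i') y := by
      apply convexHull_subset_halfplane
      rintro y ⟨k, rfl⟩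
      by_cases h1 : k = i
      · rw [h1, dd_self_left]
      · by_cases h2 : k = i'
        · rw [h2, dd_self_right]
        · exact (edgepos i k h1 h2).le
    have hgx : dd (P i) (P i') x = 0 := by
      obtain ⟨σ, τ, hσ, hτ, hστ, rfl⟩ := hxi
      rw [dd_affine _ _ _ _ _ _ hστ, dd_self_left, dd_self_right]
      ring
    have hnotint : x ∉ interior (convexHull ℝ (Set.range P)) := by
      intro hxint
      rw [mem_interior_iff_mem_nhds, Metric.mem_nhds_iff] at hxint
      obtain ⟨ε, hε, hball⟩ := hxint
      set v : ℝ × ℝ := ((P i).2 - (P i').2, (P i').1 - (P i).1) with hv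
      have hN : 0 < ((P i').1 - (P i).1) ^ 2 + ((P i').2 - (P i).2) ^ 2 := by
        have : (P i').1 - (P i).1 ≠ 0 ∨ (P i').2 - (P i).2 ≠ 0 := by
          by_contra hcc
          push_neg at hcc
          exact hPne (Prod.ext (by linarith [hcc.1]) (by linarith [hcc.2])).symm
        rcases this with h | h <;>
          nlinarith [sq_nonneg ((P i').1 - (P i).1), sq_nonneg ((P i').2 - (P i).2),
            sq_abs ((P i').1 - (P i).1), sq_abs ((P i').2 - (P i).2),
            pow_pos (abs_pos.mpr h) 2]
      set δ : ℝ := ε / (2 * (‖v‖ + 1)) with hδdef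
      have hvn : (0:ℝ) ≤ ‖v‖ := norm_nonneg v
      have hδ : 0 < δ := by positivity
      have hymem : x + (-δ) • v ∈ Metric.ball x ε := by
        rw [Metric.mem_ball, dist_eq_norm]
        have : x + (-δ) • v - x = (-δ) • v := by abel
        rw [this, norm_smul]
        simp only [norm_neg, Real.norm_eq_abs, abs_of_pos hδ]
        calc δ * ‖v‖ ≤ δ * (‖v‖ + 1) := by nlinarith
          _ = ε / (2 * (‖v‖ + 1)) * (‖v‖ + 1) := rfl
          _ = ε / 2 := by field_simp
          _ < ε := by linarith
      have hy0 := hg0 _ (hball hymem)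
      rw [dd_add_vec, hgx] at hy0
      simp only [hv, Prod.smul_fst, Prod.smul_snd, smul_eq_mul] at hy0
      nlinarith
    rw [hKclosed.frontier_eq]
    exact ⟨hxK, hnotint⟩
  have hsub2 : frontier (convexHull ℝ (Set.range P)) ⊆ polygonEdges P := by
    intro p hp
    rw [hKclosed.frontier_eq] at hp
    obtain ⟨hpK, hpni⟩ := hp
    obtain ⟨f, hf⟩ := geometric_hahn_banach_open_point hKconv.interior isOpen_interior hpni
    have hle : ∀ y ∈ convexHull ℝ (Set.range P), f y ≤ f p := le_on_hull hKconv f hz hf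
    set t := Finset.image P Finset.univ with ht
    have hrange : Set.range P = ↑t := by simp [ht]
    have hpK' : p ∈ convexHull ℝ (↑t : Set (ℝ × ℝ)) := by rw [← hrange]; exact hpK
    rw [Finset.convexHull_eq] at hpK'
    obtain ⟨w, hw0, hw1, hwp⟩ := hpK'
    set c := f p with hc
    have hylec : ∀ y ∈ t, f y ≤ c := by
      intro y hy
      exact hle y (by rw [hrange]; exact subset_convexHull ℝ _ hy)
    set S := t.filter (fun y => f y = c) with hS
    have hSsub : S ⊆ t := Finset.filter_subset _ _
    have hpsum : p = ∑ y ∈ t, w y • y := by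
      rw [← hwp, Finset.centerMass_eq_of_sum_1 _ id hw1]
      rfl
    have hfp : ∑ y ∈ t, w y * f y = c := by
      rw [hc, hpsum, map_sum]
      congr 1
      ext y
      rw [map_smul]
      rfl
    have hw0' : ∀ y ∈ t, y ∉ S → w y = 0 := by
      intro y hy hyS
      have hylt : f y < c := lt_of_le_of_ne (hylec y hy)
        (fun h => hyS (Finset.mem_filter.mpr ⟨hy, h⟩))
      have hzero : ∑ y ∈ t, w y * (c - f y) = 0 := by
        simp only [mul_sub]
        rw [Finset.sum_sub_distrib, ← Finset.sum_mul, hw1, hfp]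
        ring
      have hterm := (Finset.sum_eq_zero_iff_of_nonneg
        (fun y hy => mul_nonneg (hw0 y hy) (by linarith [hylec y hy]))).mp hzero y hy
      rcases mul_eq_zero.mp hterm with h | h
      · exact h
      · exfalso; linarith
    have hsumS : ∑ y ∈ S, w y = 1 := by
      rw [Finset.sum_subset hSsub (fun y hy hyS => hw0' y hy hyS)]
      exact hw1
    have hSne : S.Nonempty := by
      by_contra hcc
      rw [Finset.not_nonempty_iff_eq_empty] at hcc
      rw [hcc, Finset.sum_empty] at hsumS
      norm_num at hsumS
    have hpS : p ∈ convexHull ℝ (↑S : Set (ℝ × ℝ)) := by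
      have hcm : S.centerMass w id = p := by
        rw [Finset.centerMass_subset id hSsub (fun i hi hni => hw0' i hi hni)]
        exact hwp
      rw [← hcm]
      exact S.centerMass_mem_convexHull (fun y hy => hw0 y (hSsub hy))
        (by rw [hsumS]; norm_num) (fun y hy => Finset.mem_coe.mpr hy)
    have hcard : S.card ≤ 2 := by
      by_contra h23
      push_neg at h23
      rw [Finset.two_lt_card_iff] at h23
      obtain ⟨y1, y2, y3, hy1, hy2, hy3, h12, h13, h23'⟩ := h23
      obtain ⟨i1, _, hi1⟩ := Finset.mem_image.mp (hSsub hy1)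
      obtain ⟨i2, _, hi2⟩ := Finset.mem_image.mp (hSsub hy2)
      obtain ⟨i3, _, hi3⟩ := Finset.mem_image.mp (hSsub hy3)
      have hc1 : f y1 = c := (Finset.mem_filter.mp hy1).2
      have hc2 : f y2 = c := (Finset.mem_filter.mp hy2).2
      have hc3 : f y3 = c := (Finset.mem_filter.mp hy3).2
      have hd12 : i1 ≠ i2 := fun h => h12 (by rw [← hi1, ← hi2, h])
      have hd13 : i1 ≠ i3 := fun h => h13 (by rw [← hi1, ← hi3, h])
      have hd23 : i2 ≠ i3 := fun h => h23' (by rw [← hi2, ← hi3, h])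
      have hD : dd y1 y2 y3 ≠ 0 := by
        rw [← hi1, ← hi2, ← hi3]
        exact hP.dd_ne hd12 hd13 hd23
      have hfzc : f z = c := by
        have e := dd_combo_eq hD z
        have : f z = (dd z y2 y3 / dd y1 y2 y3) * c + (dd y1 z y3 / dd y1 y2 y3) * c +
            (dd y1 y2 z / dd y1 y2 y3) * c := by
          conv_lhs => rw [e]
          simp [map_add, map_smul, hc1, hc2, hc3]
        rw [this]
        have hsum3 := dd_sum_coords y1 y2 y3 z
        field_simp
        linear_combination c * hsum3
      have := hf z hz
      rw [hfzc] at this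
      exact lt_irrefl c this
    have h12 : S.card = 1 ∨ S.card = 2 := by
      have := Finset.card_pos.mpr hSne
      omega
    rcases h12 with h1 | h2
    · obtain ⟨y, hy⟩ := Finset.card_eq_one.mp h1
      rw [hy] at hpS
      simp only [Finset.coe_singleton, convexHull_singleton, Set.mem_singleton_iff] at hpS
      have hyt : y ∈ t := hSsub (by rw [hy]; exact Finset.mem_singleton_self y)
      obtain ⟨i, _, hi⟩ := Finset.mem_image.mp hyt
      refine Set.mem_iUnion.mpr ⟨i, ?_⟩
      rw [hpS, ← hi]
      exact left_mem_segment ℝ _ _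
    · obtain ⟨y1, y2, hy12, hy⟩ := Finset.card_eq_two.mp h2
      have hy1S : y1 ∈ S := by rw [hy]; exact Finset.mem_insert_self _ _
      have hy2S : y2 ∈ S := by rw [hy]; simp
      obtain ⟨i, _, hi⟩ := Finset.mem_image.mp (hSsub hy1S)
      obtain ⟨j, _, hj⟩ := Finset.mem_image.mp (hSsub hy2S)
      have hfi : f (P i) = c := by rw [hi]; exact (Finset.mem_filter.mp hy1S).2
      have hfj : f (P j) = c := by rw [hj]; exact (Finset.mem_filter.mp hy2S).2
      have hijne : i ≠ j := fun h => hy12 (by rw [← hi, ← hj, h])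
      have hpseg : p ∈ segment ℝ (P i) (P j) := by
        rw [hy] at hpS
        rw [hi, hj]
        simpa [convexHull_pair] using hpS
      have hout : ∀ k, k ≠ i → k ≠ j → f (P k) < c := by
        intro k hki hkj
        refine lt_of_le_of_ne (hylec _ (Finset.mem_image.mpr ⟨k, Finset.mem_univ _, rfl⟩)) ?_
        intro heq
        have hkS : P k ∈ S := Finset.mem_filter.mpr
          ⟨Finset.mem_image.mpr ⟨k, Finset.mem_univ _, rfl⟩, heq⟩
        rw [hy] at hkS
        rcases Finset.mem_insert.mp hkS with h | h
        · exact hki (hinj (by rw [h, ← hi]))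
        · exact hkj (hinj (by rw [Finset.mem_singleton.mp h, ← hj]))
      rcases lt_or_gt_of_ne hijne with hlt | hgt
      · exact aux_edge hn P hAP f c i j hlt hfi hfj hout hpseg
      · refine aux_edge hn P hAP f c j i hgt hfj hfi (fun k hkj hki => hout k hki hkj) ?_
        rw [segment_symm]
        exact hpseg
  exact Set.Subset.antisymm hsub1 hsub2

lemma no_opposite_sides {n : ℕ} (hn : 4 ≤ n) (P : Fin n → ℝ × ℝ) (hP : IsStrictPolygon P)
    (hC : IsConvexPolygon P) (i i' x y : Fin n)
    (hii : i' = ⟨(i.1 + 1) % n, Nat.mod_lt _ i.pos⟩)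
    (hx : 0 < dd (P i) (P i') (P x))
    (hy : dd (P i) (P i') (P y) < 0) : False := by
  have hKclosed : IsClosed (convexHull ℝ (Set.range P)) :=
    (Set.finite_range P).isClosed_convexHull (𝕜 := ℝ)
  set a := P i with ha
  set b := P i' with hb
  set px := P x with hpx
  set py := P y with hpy
  set m : ℝ × ℝ := (1/2 : ℝ) • a + (1/2 : ℝ) • b with hm
  have hmedge : m ∈ polygonEdges P := by
    rw [hm, ha, hb, hii]
    exact Set.mem_iUnion.mpr ⟨i, ⟨1/2, 1/2, by norm_num, by norm_num, by norm_num, rfl⟩⟩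
  have hmf : m ∈ frontier (convexHull ℝ (Set.range P)) := by rw [← hC]; exact hmedge
  have hmni : m ∉ interior (convexHull ℝ (Set.range P)) := by
    rw [hKclosed.frontier_eq] at hmf
    exact hmf.2
  apply hmni
  set U : Set (ℝ × ℝ) := {u | 0 < dd u b px / dd a b px ∧ 0 < dd a u px / dd a b px ∧
    0 < dd u b py / dd a b py ∧ 0 < dd a u py / dd a b py} with hU
  have hUopen : IsOpen U := by
    have c1 : Continuous (fun u : ℝ × ℝ => dd u b px / dd a b px) := by unfold dd; fun_prop
    have c2 : Continuous (fun u : ℝ × ℝ => dd a u px / dd a b px) := by unfold dd; fun_prop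
    have c3 : Continuous (fun u : ℝ × ℝ => dd u b py / dd a b py) := by unfold dd; fun_prop
    have c4 : Continuous (fun u : ℝ × ℝ => dd a u py / dd a b py) := by unfold dd; fun_prop
    exact IsOpen.inter (isOpen_lt continuous_const c1) (IsOpen.inter
      (isOpen_lt continuous_const c2) (IsOpen.inter (isOpen_lt continuous_const c3)
        (isOpen_lt continuous_const c4)))
  have hmU : m ∈ U := by
    have e1 : dd m b px = dd a b px / 2 := by simp [hm, dd]; ring
    have e2 : dd a m px = dd a b px / 2 := by simp [hm, dd]; ring
    have e3 : dd m b py = dd a b py / 2 := by simp [hm, dd]; ring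
    have e4 : dd a m py = dd a b py / 2 := by simp [hm, dd]; ring
    have q1 : dd a b px / 2 / dd a b px = 1/2 := by
      rw [div_div, mul_comm, ← div_div, div_self (ne_of_gt hx)]
    have q2 : dd a b py / 2 / dd a b py = 1/2 := by
      rw [div_div, mul_comm, ← div_div, div_self (ne_of_lt hy)]
    refine ⟨?_, ?_, ?_, ?_⟩
    · rw [e1, q1]; norm_num
    · rw [e2, q1]; norm_num
    · rw [e3, q2]; norm_num
    · rw [e4, q2]; norm_num
  have hUK : U ⊆ convexHull ℝ (Set.range P) := by
    intro u hu
    obtain ⟨h1, h2, h3, h4⟩ := hu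
    rcases le_or_gt 0 (dd a b u) with h | h
    · refine convexHull_mono ?_ (mem_triangle (ne_of_gt hx) h1.le h2.le
        (div_nonneg h hx.le))
      rintro w hw
      simp only [Set.mem_insert_iff, Set.mem_singleton_iff] at hw
      rcases hw with rfl | rfl | rfl
      exacts [⟨i, rfl⟩, ⟨i', rfl⟩, ⟨x, rfl⟩]
    · refine convexHull_mono ?_ (mem_triangle (ne_of_lt hy) h3.le h4.le ?_)
      · rintro w hw
        simp only [Set.mem_insert_iff, Set.mem_singleton_iff] at hw
        rcases hw with rfl | rfl | rfl
        exacts [⟨i, rfl⟩, ⟨i', rfl⟩, ⟨y, rfl⟩]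
      · rw [div_nonneg_iff]
        right
        exact ⟨h.le, hy.le⟩
  exact interior_maximal hUK hUopen hmU

lemma prod_pos_trans {a b c : ℝ} (h1 : 0 < a * b) (h2 : 0 < b * c) : 0 < a * c := by
  rcases lt_trichotomy b 0 with h | h | h
  · have ha : a < 0 := by nlinarith
    have hc : c < 0 := by nlinarith
    exact mul_pos_of_neg_of_neg ha hc
  · rw [h] at h1; simp at h1
  · have ha : 0 < a := by nlinarith
    have hc : 0 < c := by nlinarith
    exact mul_pos ha hc

lemma sign_eq_of_mul_pos {a b : ℝ} (h : 0 < a * b) :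
    SignType.sign a = SignType.sign b := by
  rcases lt_trichotomy a 0 with ha | ha | ha
  · have hb : b < 0 := by nlinarith
    rw [sign_eq_neg_one_iff.mpr ha, sign_eq_neg_one_iff.mpr hb]
  · rw [ha] at h; simp at h
  · have hb : 0 < b := by nlinarith
    rw [sign_eq_one_iff.mpr ha, sign_eq_one_iff.mpr hb]

lemma dd_swap_pts (a b c : ℝ × ℝ) :
    dd a.swap b.swap c.swap = - dd a b c := by
  simp only [dd, Prod.fst_swap, Prod.snd_swap]; ring

lemma isStrictPolygon_swap {n : ℕ} (P : Fin n → ℝ × ℝ) (hP : IsStrictPolygon P) :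
    IsStrictPolygon (fun i => (P i).swap) := by
  intro i j k hij hik hjk hcol
  have h := collinear_iff_dd.mp hcol
  rw [dd_swap_pts] at h
  exact hP i j k hij hik hjk (collinear_iff_dd.mpr (by linarith))

lemma isConvexPolygon_of_swap {n : ℕ} (P : Fin n → ℝ × ℝ)
    (hC : IsConvexPolygon (fun i => (P i).swap)) : IsConvexPolygon P := by
  have hM : Function.Injective (Prod.swap : ℝ × ℝ → ℝ × ℝ) := Prod.swap_injective
  set f : (ℝ × ℝ) →ᵃ[ℝ] (ℝ × ℝ) := (LinearEquiv.prodComm ℝ ℝ ℝ).toLinearMap.toAffineMap with hf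
  have hfapp : ∀ x : ℝ × ℝ, f x = x.swap := fun x => rfl
  have hedges : polygonEdges (fun i => (P i).swap) = Prod.swap '' polygonEdges P := by
    unfold polygonEdges
    rw [Set.image_iUnion]
    refine Set.iUnion_congr fun i => ?_
    have := image_segment ℝ f (P i) (P ⟨(i.1 + 1) % n, Nat.mod_lt _ i.pos⟩)
    simp only [hfapp] at this
    rw [← this]
  have hrange : Set.range (fun i => (P i).swap) = Prod.swap '' Set.range P := by
    rw [← Set.range_comp]; rfl
  have hhull : convexHull ℝ (Prod.swap '' Set.range P) =
      Prod.swap '' convexHull ℝ (Set.range P) := by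
    have := AffineMap.image_convexHull f (Set.range P)
    simp only [hfapp] at this
    rw [← this]
  have hfront : frontier (Prod.swap '' convexHull ℝ (Set.range P)) =
      Prod.swap '' frontier (convexHull ℝ (Set.range P)) := by
    have := (Homeomorph.prodComm ℝ ℝ).image_frontier (convexHull ℝ (Set.range P))
    rw [Homeomorph.coe_prodComm] at this
    exact this.symm
  unfold IsConvexPolygon at hC ⊢
  rw [hedges, hrange, hhull, hfront] at hC
  exact Set.image_injective.mpr hM hC

lemma edge_prod_pos {n : ℕ} (hn : 4 ≤ n) (P : Fin n → ℝ × ℝ) (hP : IsStrictPolygon P)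
    (hC : IsConvexPolygon P) (i i' x y : Fin n)
    (hii : i' = ⟨(i.1 + 1) % n, Nat.mod_lt _ i.pos⟩)
    (hxi : x ≠ i) (hxi' : x ≠ i') (hyi : y ≠ i) (hyi' : y ≠ i') :
    0 < dd (P i) (P i') (P x) * dd (P i) (P i') (P y) := by
  have hii' : i ≠ i' := by
    intro h
    have hv := congrArg Fin.val (h.trans hii)
    simp only at hv
    rcases Nat.lt_or_ge (i.1 + 1) n with hlt | hge
    · rw [Nat.mod_eq_of_lt hlt] at hv; omega
    · have hh : i.1 + 1 = n := by omega
      rw [hh, Nat.mod_self] at hv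
      have := i.2
      omega
  have hxne : dd (P i) (P i') (P x) ≠ 0 := hP.dd_ne hii' (Ne.symm hxi) (Ne.symm hxi')
  have hyne : dd (P i) (P i') (P y) ≠ 0 := hP.dd_ne hii' (Ne.symm hyi) (Ne.symm hyi')
  rcases lt_trichotomy (dd (P i) (P i') (P x)) 0 with h1 | h1 | h1
  · rcases lt_trichotomy (dd (P i) (P i') (P y)) 0 with h2 | h2 | h2
    · exact mul_pos_of_neg_of_neg h1 h2
    · exact absurd h2 hyne
    · exact absurd (no_opposite_sides hn P hP hC i i' y x hii h2 h1) not_false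
  · exact absurd h1 hxne
  · rcases lt_trichotomy (dd (P i) (P i') (P y)) 0 with h2 | h2 | h2
    · exact absurd (no_opposite_sides hn P hP hC i i' x y hii h1 h2) not_false
    · exact absurd h2 hyne
    · exact mul_pos h1 h2

lemma edge_prod_pos' {n : ℕ} (hn : 4 ≤ n) (P : Fin n → ℝ × ℝ) (hP : IsStrictPolygon P)
    (hC : IsConvexPolygon P) (e x y : ℕ)
    (he : e + 1 < n) (hx : x < n) (hy : y < n)
    (hxe : x ≠ e) (hxe1 : x ≠ e + 1) (hye : y ≠ e) (hye1 : y ≠ e + 1) :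
    0 < dd (P ⟨e, by omega⟩) (P ⟨e + 1, he⟩) (P ⟨x, hx⟩) *
        dd (P ⟨e, by omega⟩) (P ⟨e + 1, he⟩) (P ⟨y, hy⟩) := by
  refine edge_prod_pos hn P hP hC ⟨e, by omega⟩ ⟨e + 1, he⟩ ⟨x, hx⟩ ⟨y, hy⟩ ?_
    (Fin.ne_of_val_ne hxe) (Fin.ne_of_val_ne hxe1) (Fin.ne_of_val_ne hye)
    (Fin.ne_of_val_ne hye1)
  apply Fin.ext
  simp only
  rw [Nat.mod_eq_of_lt he]

lemma edge_chain {n : ℕ} (hn : 4 ≤ n) (P : Fin n → ℝ × ℝ) (hP : IsStrictPolygon P)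
    (hC : IsConvexPolygon P) :
    ∀ e x : ℕ, ∀ he : e + 1 ≤ n - 1, ∀ hx : x < n, x ≠ e → x ≠ e + 1 →
      0 < dd (P ⟨e, by omega⟩) (P ⟨e + 1, by omega⟩) (P ⟨x, hx⟩) *
          dd (P ⟨0, by omega⟩) (P ⟨1, by omega⟩) (P ⟨2, by omega⟩) := by
  intro e
  induction e with
  | zero =>
    intro x he hx hx0 hx1
    exact edge_prod_pos' hn P hP hC 0 x 2 (by omega) hx (by omega) hx0 hx1
      (by omega) (by omega)
  | succ e ih =>
    intro x he hx hx0 hx1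
    have h1 : 0 < dd (P ⟨e + 1, by omega⟩) (P ⟨e + 2, by omega⟩) (P ⟨x, hx⟩) *
        dd (P ⟨e + 1, by omega⟩) (P ⟨e + 2, by omega⟩) (P ⟨e, by omega⟩) :=
      edge_prod_pos' hn P hP hC (e + 1) x e (by omega) hx (by omega) hx0 hx1
        (by omega) (by omega)
    have h2 : 0 < dd (P ⟨e, by omega⟩) (P ⟨e + 1, by omega⟩) (P ⟨e + 2, by omega⟩) *
        dd (P ⟨0, by omega⟩) (P ⟨1, by omega⟩) (P ⟨2, by omega⟩) :=
      ih (e + 2) (by omega) (by omega) (by omega) (by omega)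
    rw [← dd_cyclic (P ⟨e, by omega⟩) (P ⟨e + 1, by omega⟩) (P ⟨e + 2, by omega⟩)] at h2
    exact prod_pos_trans h1 h2

/-- A strict `n`-gon `P = (V_0, …, V_{n-1})` with `n ≥ 4` is convex if and only if
`sign Δ_{i-1,i,i+1} = sign Δ_{0,j,j+1} = sign Δ_{0,1,k+1}` for all `i, k ∈ {2, …, n-2}`
and all `j ∈ {1, …, n-2}`. -/
theorem isConvexPolygon_iff_signs {n : ℕ} (hn : 4 ≤ n)
    (P : Fin n → ℝ × ℝ) (hP : IsStrictPolygon P) :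
    IsConvexPolygon P ↔
      ∀ i j k : ℕ, ∀ hi1 : 2 ≤ i, ∀ hi2 : i ≤ n - 2, ∀ hj1 : 1 ≤ j, ∀ hj2 : j ≤ n - 2,
        ∀ hk1 : 2 ≤ k, ∀ hk2 : k ≤ n - 2,
        SignType.sign (polyDet P ⟨i - 1, by omega⟩ ⟨i, by omega⟩ ⟨i + 1, by omega⟩) =
          SignType.sign (polyDet P ⟨0, by omega⟩ ⟨j, by omega⟩ ⟨j + 1, by omega⟩) ∧
        SignType.sign (polyDet P ⟨0, by omega⟩ ⟨j, by omega⟩ ⟨j + 1, by omega⟩) =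
          SignType.sign (polyDet P ⟨0, by omega⟩ ⟨1, by omega⟩ ⟨k + 1, by omega⟩) := by
  constructor
  · intro hC i j k hi1 hi2 hj1 hj2 hk1 hk2
    have hA : 0 < dd (P ⟨i - 1, by omega⟩) (P ⟨i, by omega⟩) (P ⟨i + 1, by omega⟩) *
        dd (P ⟨0, by omega⟩) (P ⟨1, by omega⟩) (P ⟨2, by omega⟩) := by
      have h := edge_chain hn P hP hC (i - 1) (i + 1) (by omega) (by omega) (by omega)
        (by omega)
      have he : (⟨i - 1 + 1, by omega⟩ : Fin n) = ⟨i, by omega⟩ := Fin.ext (by simp; omega)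
      rwa [he] at h
    have hB : 0 < dd (P ⟨0, by omega⟩) (P ⟨j, by omega⟩) (P ⟨j + 1, by omega⟩) *
        dd (P ⟨0, by omega⟩) (P ⟨1, by omega⟩) (P ⟨2, by omega⟩) := by
      have h := edge_chain hn P hP hC j 0 (by omega) (by omega) (by omega) (by omega)
      rwa [dd_cyclic (P ⟨0, by omega⟩) (P ⟨j, by omega⟩) (P ⟨j + 1, by omega⟩)] at h
    have hCk : 0 < dd (P ⟨0, by omega⟩) (P ⟨1, by omega⟩) (P ⟨k + 1, by omega⟩) *
        dd (P ⟨0, by omega⟩) (P ⟨1, by omega⟩) (P ⟨2, by omega⟩) :=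
      edge_chain hn P hP hC 0 (k + 1) (by omega) (by omega) (by omega) (by omega)
    have hB' : 0 < dd (P ⟨0, by omega⟩) (P ⟨1, by omega⟩) (P ⟨2, by omega⟩) *
        dd (P ⟨0, by omega⟩) (P ⟨j, by omega⟩) (P ⟨j + 1, by omega⟩) := by
      rwa [mul_comm] at hB
    have hCk' : 0 < dd (P ⟨0, by omega⟩) (P ⟨1, by omega⟩) (P ⟨2, by omega⟩) *
        dd (P ⟨0, by omega⟩) (P ⟨1, by omega⟩) (P ⟨k + 1, by omega⟩) := by
      rwa [mul_comm] at hCk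
    constructor
    · rw [polyDet_eq_dd, polyDet_eq_dd]
      exact sign_eq_of_mul_pos (prod_pos_trans hA hB')
    · rw [polyDet_eq_dd, polyDet_eq_dd]
      exact sign_eq_of_mul_pos (prod_pos_trans hB hCk')
  · intro hR
    have hne01 : (⟨0, by omega⟩ : Fin n) ≠ ⟨1, by omega⟩ :=
      Fin.ne_of_val_ne (show (0:ℕ) ≠ 1 by omega)
    have hne02 : (⟨0, by omega⟩ : Fin n) ≠ ⟨2, by omega⟩ :=
      Fin.ne_of_val_ne (show (0:ℕ) ≠ 2 by omega)
    have hne12 : (⟨1, by omega⟩ : Fin n) ≠ ⟨2, by omega⟩ :=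
      Fin.ne_of_val_ne (show (1:ℕ) ≠ 2 by omega)
    have hs0ne : polyDet P ⟨0, by omega⟩ ⟨1, by omega⟩ ⟨2, by omega⟩ ≠ 0 := by
      rw [polyDet_eq_dd]
      exact hP.dd_ne hne01 hne02 hne12
    have hbase := hR 2 1 2 (by omega) (by omega) (by omega) (by omega) (by omega) (by omega)
    have hRi : ∀ i, ∀ _h1 : 2 ≤ i, ∀ _h2 : i ≤ n - 2,
        SignType.sign (polyDet P ⟨i - 1, by omega⟩ ⟨i, by omega⟩ ⟨i + 1, by omega⟩) =
        SignType.sign (polyDet P ⟨0, by omega⟩ ⟨1, by omega⟩ ⟨2, by omega⟩) := by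
      intro i h1 h2
      exact (hR i 1 2 h1 h2 (by omega) (by omega) (by omega) (by omega)).1
    have hRj : ∀ j, ∀ _h1 : 1 ≤ j, ∀ _h2 : j ≤ n - 2,
        SignType.sign (polyDet P ⟨0, by omega⟩ ⟨j, by omega⟩ ⟨j + 1, by omega⟩) =
        SignType.sign (polyDet P ⟨0, by omega⟩ ⟨1, by omega⟩ ⟨2, by omega⟩) := by
      intro j h1 h2
      have h := hR 2 j 2 (by omega) (by omega) h1 h2 (by omega) (by omega)
      exact h.1.symm.trans hbase.1
    have hRk : ∀ m, ∀ _h1 : 3 ≤ m, ∀ _h2 : m ≤ n - 1,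
        SignType.sign (polyDet P ⟨0, by omega⟩ ⟨1, by omega⟩ ⟨m, by omega⟩) =
        SignType.sign (polyDet P ⟨0, by omega⟩ ⟨1, by omega⟩ ⟨2, by omega⟩) := by
      intro m h1 h2
      have h := hR 2 1 (m - 1) (by omega) (by omega) (by omega) (by omega) (by omega)
        (by omega)
      have he : (⟨m - 1 + 1, by omega⟩ : Fin n) = ⟨m, by omega⟩ := Fin.ext (by simp; omega)
      rw [he] at h
      exact h.2.symm
    rcases lt_trichotomy (polyDet P ⟨0, by omega⟩ ⟨1, by omega⟩ ⟨2, by omega⟩) 0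
      with hneg | hzero | hpos
    · -- mirrored polygon
      set Q : Fin n → ℝ × ℝ := fun i => (P i).swap with hQdef
      have hQ : IsStrictPolygon Q := isStrictPolygon_swap P hP
      have hQd : ∀ a b c : Fin n, dd (Q a) (Q b) (Q c) = - dd (P a) (P b) (P c) := by
        intro a b c
        simp only [hQdef]
        exact dd_swap_pts _ _ _
      have hsgn : SignType.sign (polyDet P ⟨0, by omega⟩ ⟨1, by omega⟩ ⟨2, by omega⟩)
          = -1 := sign_eq_neg_one_iff.mpr hneg
      have hW : ∀ (a : ℕ) (h : a < n),
          Q ⟨a % n, Nat.mod_lt _ (by omega)⟩ = Q ⟨a, h⟩ :=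
        fun a h => congrArg Q (Fin.ext (Nat.mod_eq_of_lt h))
      have hAPn := allPos_of_signs hn (fun a => Q ⟨a % n, Nat.mod_lt _ (by omega)⟩)
        ?_ ?_ ?_
      · have hAP : ∀ a b c : Fin n, a < b → b < c → 0 < dd (Q a) (Q b) (Q c) := by
          intro a b c hab hbc
          have hc := c.2
          have h5 := hAPn a.1 b.1 c.1 hab hbc (by omega)
          beta_reduce at h5
          rwa [hW a.1 a.2, hW b.1 b.2, hW c.1 c.2] at h5
        exact isConvexPolygon_of_swap P (convex_of_allPos hn Q hQ hAP)
      · intro i h1 h2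
        beta_reduce
        rw [hW _ (by omega : i - 1 < n), hW _ (by omega : i < n),
          hW _ (by omega : i + 1 < n), hQd]
        have hs := (hRi i h1 h2).trans hsgn
        have := sign_eq_neg_one_iff.mp hs
        rw [polyDet_eq_dd] at this
        linarith
      · intro j h1 h2
        beta_reduce
        rw [hW _ (by omega : 0 < n), hW _ (by omega : j < n),
          hW _ (by omega : j + 1 < n), hQd]
        have hs := (hRj j h1 h2).trans hsgn
        have := sign_eq_neg_one_iff.mp hs
        rw [polyDet_eq_dd] at this
        linarith
      · intro m h1 h2
        beta_reduce
        rw [hW _ (by omega : 0 < n), hW _ (by omega : 1 < n),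
          hW _ (by omega : m < n), hQd]
        rcases Nat.lt_or_ge m 3 with hm | hm
        · have hm2 : m = 2 := by omega
          subst hm2
          rw [polyDet_eq_dd] at hneg
          linarith
        · have hs := (hRk m hm h2).trans hsgn
          have := sign_eq_neg_one_iff.mp hs
          rw [polyDet_eq_dd] at this
          linarith
    · exact absurd hzero hs0ne
    · have hsgn : SignType.sign (polyDet P ⟨0, by omega⟩ ⟨1, by omega⟩ ⟨2, by omega⟩)
          = 1 := sign_eq_one_iff.mpr hpos
      have hW : ∀ (a : ℕ) (h : a < n),
          P ⟨a % n, Nat.mod_lt _ (by omega)⟩ = P ⟨a, h⟩ :=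
        fun a h => congrArg P (Fin.ext (Nat.mod_eq_of_lt h))
      have hAPn := allPos_of_signs hn (fun a => P ⟨a % n, Nat.mod_lt _ (by omega)⟩)
        ?_ ?_ ?_
      · have hAP : ∀ a b c : Fin n, a < b → b < c → 0 < dd (P a) (P b) (P c) := by
          intro a b c hab hbc
          have hc := c.2
          have h5 := hAPn a.1 b.1 c.1 hab hbc (by omega)
          beta_reduce at h5
          rwa [hW a.1 a.2, hW b.1 b.2, hW c.1 c.2] at h5
        exact convex_of_allPos hn P hP hAP
      · intro i h1 h2
        beta_reduce
        rw [hW _ (by omega : i - 1 < n), hW _ (by omega : i < n),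
          hW _ (by omega : i + 1 < n)]
        have hs := (hRi i h1 h2).trans hsgn
        have := sign_eq_one_iff.mp hs
        rwa [polyDet_eq_dd] at this
      · intro j h1 h2
        beta_reduce
        rw [hW _ (by omega : 0 < n), hW _ (by omega : j < n),
          hW _ (by omega : j + 1 < n)]
        have hs := (hRj j h1 h2).trans hsgn
        have := sign_eq_one_iff.mp hs
        rwa [polyDet_eq_dd] at this
      · intro m h1 h2
        beta_reduce
        rw [hW _ (by omega : 0 < n), hW _ (by omega : 1 < n),
          hW _ (by omega : m < n)]
        rcases Nat.lt_or_ge m 3 with hm | hm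
        · have hm2 : m = 2 := by omega
          subst hm2
          rwa [polyDet_eq_dd] at hpos
        · have hs := (hRk m hm h2).trans hsgn
          have := sign_eq_one_iff.mp hs
          rwa [polyDet_eq_dd] at this
end PolyAux
end

section
/- For every natural number k there exists a natural number F(k) such that every strict n-gon P with n ≥ F(k) has a convex sub-k-gon. -/
noncomputable def sg (a b c : ℝ × ℝ) : ℝ :=
  (b.1 - a.1) * (c.2 - a.2) - (b.2 - a.2) * (c.1 - a.1)

lemma sg_cyc (a b c : ℝ × ℝ) : sg a b c = sg b c a := by simp [sg]; ring
lemma sg_swap (a b c : ℝ × ℝ) : sg a b c = -sg a c b := by simp [sg]; ring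
lemma sg_self₁ (a c : ℝ × ℝ) : sg a a c = 0 := by simp [sg]
lemma sg_self₃ (a b : ℝ × ℝ) : sg a b a = 0 := by simp [sg]
lemma sg_self₂ (a b : ℝ × ℝ) : sg a b b = 0 := by simp [sg]; ring
lemma sg_bary (a b c x : ℝ × ℝ) :
    sg a b c • x = sg x b c • a + sg a x c • b + sg a b x • c := by
  ext <;> simp [sg, Prod.smul_def, smul_eq_mul] <;> ring
lemma sg_sum (a b c x : ℝ × ℝ) : sg x b c + sg a x c + sg a b x = sg a b c := by
  simp [sg]; ring
lemma sg_refl (a b c : ℝ × ℝ) :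
    sg (a.1, -a.2) (b.1, -b.2) (c.1, -c.2) = - sg a b c := by simp [sg]; ring
lemma sg_seg {a b x : ℝ × ℝ} (h : x ∈ segment ℝ a b) : sg a b x = 0 := by
  obtain ⟨s, t, hs, ht, hst, rfl⟩ := h
  have : s = 1 - t := by linarith
  subst this
  simp [sg, Prod.smul_def, smul_eq_mul]; ring
lemma sg_cont (a b : ℝ × ℝ) : Continuous fun y => sg a b y := by unfold sg; fun_prop

lemma sg_convex (a b : ℝ × ℝ) : Convex ℝ {y : ℝ × ℝ | 0 ≤ sg a b y} := by
  have hL : IsLinearMap ℝ (fun y : ℝ × ℝ => (b.1 - a.1) * y.2 - (b.2 - a.2) * y.1) :=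
    ⟨by intros x y; simp; ring, by intros c y; simp [Prod.smul_def]; ring⟩
  have h := convex_halfSpace_ge hL ((b.1 - a.1) * a.2 - (b.2 - a.2) * a.1)
  convert h using 1
  · rfl
  ext y
  simp only [Set.mem_setOf_eq, sg]
  constructor <;> intro <;> linarith

lemma sg_perturb (a b p : ℝ × ℝ) (t : ℝ) :
    sg a b (p + t • ((b.2 - a.2, a.1 - b.1) : ℝ × ℝ))
      = sg a b p - t * ((b.1 - a.1) ^ 2 + (b.2 - a.2) ^ 2) := by
  simp [sg, Prod.smul_def, smul_eq_mul]; ring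

lemma tri_mem {a b c x : ℝ × ℝ} (hS : 0 < sg a b c) (hα : 0 ≤ sg x b c)
    (hβ : 0 ≤ sg a x c) (hγ : 0 ≤ sg a b x) : x ∈ convexHull ℝ ({a, b, c} : Set (ℝ × ℝ)) := by
  set S := sg a b c with hSdef
  apply mem_convexHull_of_exists_fintype (ι := Fin 3)
    ![sg x b c / S, sg a x c / S, sg a b x / S] ![a, b, c]
  · intro i; fin_cases i <;> simp <;> positivity
  · rw [Fin.sum_univ_three]; simp only [Matrix.cons_val_zero, Matrix.cons_val_one,
      Matrix.head_cons, Matrix.cons_val_two, Matrix.tail_cons]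
    field_simp
    exact sg_sum a b c x
  · intro i; fin_cases i <;> simp
  · rw [Fin.sum_univ_three]
    simp only [Matrix.cons_val_zero, Matrix.cons_val_one, Matrix.head_cons,
      Matrix.cons_val_two, Matrix.tail_cons, div_eq_inv_mul, ← smul_smul]
    rw [← smul_add, ← smul_add, ← sg_bary, smul_smul, inv_mul_cancel₀ hS.ne', one_smul]

lemma sg_affine_sum {ι : Type*} (s : Finset ι) (a b : ℝ × ℝ) (z : ι → ℝ × ℝ) (w : ι → ℝ)
    (hw : ∑ i ∈ s, w i = 1) :
    sg a b (∑ i ∈ s, w i • z i) = ∑ i ∈ s, w i * sg a b (z i) := by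
  have h1 : (∑ i ∈ s, w i • z i).1 = ∑ i ∈ s, w i * (z i).1 := by
    rw [Prod.fst_sum]; exact Finset.sum_congr rfl fun i _ => rfl
  have h2 : (∑ i ∈ s, w i • z i).2 = ∑ i ∈ s, w i * (z i).2 := by
    rw [Prod.snd_sum]; exact Finset.sum_congr rfl fun i _ => rfl
  have : ∑ i ∈ s, w i * sg a b (z i)
      = (b.1 - a.1) * (∑ i ∈ s, w i * (z i).2) - (b.2 - a.2) * (∑ i ∈ s, w i * (z i).1)
        + (a.1 * (b.2 - a.2) - a.2 * (b.1 - a.1)) * (∑ i ∈ s, w i) := by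
    rw [Finset.mul_sum, Finset.mul_sum, Finset.mul_sum, ← Finset.sum_sub_distrib,
      ← Finset.sum_add_distrib]
    exact Finset.sum_congr rfl fun i _ => by simp [sg]; ring
  rw [this, hw, sg, h1, h2]; ring

lemma face_lemma {ι : Type*} {z : ι → ℝ × ℝ} {a b x : ℝ × ℝ}
    (h0 : ∀ i, 0 ≤ sg a b (z i))
    (hx : x ∈ convexHull ℝ (Set.range z)) (hfx : sg a b x = 0) :
    x ∈ convexHull ℝ (z '' {i | sg a b (z i) = 0}) := by
  rw [convexHull_range_eq_exists_affineCombination] at hx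
  obtain ⟨s, w, hw0, hw1, hxw⟩ := hx
  rw [Finset.affineCombination_eq_linear_combination s z w hw1] at hxw
  have hterm : ∀ i ∈ s, w i * sg a b (z i) = 0 := by
    have hsum : ∑ i ∈ s, w i * sg a b (z i) = 0 := by
      rw [← sg_affine_sum s a b z w hw1, hxw, hfx]
    intro i hi
    exact (Finset.sum_eq_zero_iff_of_nonneg
      (fun i hi => mul_nonneg (hw0 i hi) (h0 i))).1 hsum i hi
  have hfilt : ∑ i ∈ s.filter (fun i => w i ≠ 0), w i = 1 := by
    rw [Finset.sum_filter_ne_zero, hw1]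
  have hx' : x = (s.filter (fun i => w i ≠ 0)).centerMass w z := by
    rw [Finset.centerMass_eq_of_sum_1 _ _ hfilt]
    rw [← hxw]
    exact (Finset.sum_filter_of_ne (fun i _ h => by
      intro hw0'; exact h (by rw [hw0', zero_smul]))).symm
  rw [hx']
  apply Finset.centerMass_mem_convexHull _ (fun i hi => hw0 i (Finset.mem_of_mem_filter i hi))
    (by rw [hfilt]; norm_num)
  intro i hi
  rw [Finset.mem_filter] at hi
  refine Set.mem_image_of_mem z ?_
  have := hterm i hi.1
  rcases mul_eq_zero.1 this with h | h
  · exact absurd h hi.2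
  · exact h

/-- direction escape: if moving from `p` in direction `u` leaves `S`, `p` is not interior. -/
lemma not_mem_interior_of_dir {S : Set (ℝ × ℝ)} {p u : ℝ × ℝ}
    (h : ∀ t : ℝ, 0 < t → p + t • u ∉ S) : p ∉ interior S := by
  intro hp
  have hnh : S ∈ nhds p := mem_interior_iff_mem_nhds.1 hp
  have hcont : Filter.Tendsto (fun t : ℝ => p + t • u) (nhdsWithin 0 (Set.Ioi 0)) (nhds p) := by
    have h1 : Filter.Tendsto (fun t : ℝ => p + t • u) (nhds 0) (nhds (p + (0 : ℝ) • u)) := by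
      apply Continuous.tendsto
      fun_prop
    simpa using h1.mono_left nhdsWithin_le_nhds
  have hev := hcont.eventually_mem hnh
  have hself : ∀ᶠ t in nhdsWithin (0:ℝ) (Set.Ioi 0), t ∈ Set.Ioi (0:ℝ) :=
    eventually_mem_nhdsWithin
  obtain ⟨t, htS, ht⟩ := (hev.and hself).exists
  exact h t ht htS

def nxt {k : ℕ} (i : Fin k) : Fin k := ⟨(i.1 + 1) % k, Nat.mod_lt _ i.pos⟩

lemma polygonEdges_eq {k : ℕ} (Q : Fin k → ℝ × ℝ) :
    polygonEdges Q = ⋃ i : Fin k, segment ℝ (Q i) (Q (nxt i)) := rfl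

/-- discrete IVT -/
lemma ivt (h : ℕ → ℝ) : ∀ m : ℕ, 0 ≤ h 1 → h (m + 2) ≤ 0 →
    ∃ j, 1 ≤ j ∧ j + 1 ≤ m + 2 ∧ 0 ≤ h j ∧ h (j + 1) ≤ 0 := by
  intro m
  induction m with
  | zero => intro h1 h2; exact ⟨1, le_refl _, le_refl _, h1, h2⟩
  | succ m ih =>
    intro h1 h2
    by_cases hc : 0 ≤ h (m + 2)
    · exact ⟨m + 2, by omega, by omega, hc, h2⟩
    · obtain ⟨j, hj1, hj2, hj3, hj4⟩ := ih h1 (le_of_not_ge hc)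
      exact ⟨j, hj1, by omega, hj3, hj4⟩
lemma ccw_convexPolygon {k : ℕ} (hk : 3 ≤ k) (Q : Fin k → ℝ × ℝ)
    (H : ∀ i j l : Fin k, i < j → j < l → 0 < sg (Q i) (Q j) (Q l)) :
    IsConvexPolygon Q := by
  have kpos : 0 < k := by omega
  -- edge positivity
  have epos : ∀ i m : Fin k, m ≠ i → m ≠ nxt i → 0 < sg (Q i) (Q (nxt i)) (Q m) := by
    intro i m hmi hmn
    by_cases hi : i.1 + 1 < k
    · have hn : (nxt i).1 = i.1 + 1 := Nat.mod_eq_of_lt hi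
      rcases lt_trichotomy m.1 i.1 with h | h | h
      · have := H m i (nxt i) (by rw [Fin.lt_def]; omega) (by rw [Fin.lt_def, hn]; omega)
        rwa [sg_cyc] at this
      · exact absurd (Fin.ext h) hmi
      · have hm2 : i.1 + 1 < m.1 := by
          rcases Nat.lt_or_ge m.1 (i.1 + 2) with h2 | h2
          · exact absurd (Fin.ext (by omega : m.1 = (nxt i).1)) hmn
          · omega
        exact H i (nxt i) m (by rw [Fin.lt_def, hn]; omega) (by rw [Fin.lt_def, hn]; omega)
    · have hik : i.1 + 1 = k := by omega
      have hn : (nxt i).1 = 0 := by simp [nxt, hik]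
      have hm0 : 0 < m.1 := by
        rcases Nat.eq_zero_or_pos m.1 with h | h
        · exact absurd (Fin.ext (by omega : m.1 = (nxt i).1)) hmn
        · exact h
      have hmi' : m.1 < i.1 := by
        have := m.2; have : m.1 ≠ i.1 := fun h => hmi (Fin.ext h); omega
      have := H (nxt i) m i (by rw [Fin.lt_def, hn]; omega) (by rw [Fin.lt_def]; omega)
      rwa [sg_cyc]
  -- adjacent vertices distinct
  have hne : ∀ i : Fin k, Q i ≠ Q (nxt i) := by
    intro i h
    have hex : ∃ m : Fin k, m ≠ i ∧ m ≠ nxt i := by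
      by_contra hc
      push_neg at hc
      have hsub : (Finset.univ : Finset (Fin k)) ⊆ {i, nxt i} := by
        intro m _
        by_cases hm : m = i
        · simp [hm]
        · simp [hc m hm]
      have := Finset.card_le_card hsub
      have h2 : ({i, nxt i} : Finset (Fin k)).card ≤ 2 := Finset.card_insert_le _ _ |>.trans (by simp)
      simp [Finset.card_univ] at this
      omega
    obtain ⟨m, hm1, hm2⟩ := hex
    have hp := epos i m hm1 hm2
    rw [h, sg_self₁] at hp
    exact lt_irrefl _ hp
  -- hull inside each halfplane
  have hsub : ∀ i : Fin k, convexHull ℝ (Set.range Q) ⊆ {y | 0 ≤ sg (Q i) (Q (nxt i)) y} := by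
    intro i
    apply convexHull_min _ (sg_convex _ _)
    rintro _ ⟨m, rfl⟩
    by_cases h1 : m = i
    · subst h1; simp [sg_self₃]
    · by_cases h2 : m = nxt i
      · subst h2; simp [sg_self₂]
      · exact (epos i m h1 h2).le
  have hclosed : IsClosed (convexHull ℝ (Set.range Q)) :=
    ((Set.finite_range Q).isCompact_convexHull ℝ).isClosed
  -- triangulation : every point of all halfplanes is in the hull
  have tri_cover : ∀ y : ℝ × ℝ, (∀ i : Fin k, 0 ≤ sg (Q i) (Q (nxt i)) y) →
      y ∈ convexHull ℝ (Set.range Q) := by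
    intro y hy
    set g : ℕ → ℝ := fun j => sg (Q ⟨0, kpos⟩) (Q ⟨j % k, Nat.mod_lt _ kpos⟩) y with hg
    have hg1 : 0 ≤ g 1 := by
      have h0 := hy ⟨0, kpos⟩
      have he : nxt (⟨0, kpos⟩ : Fin k) = ⟨1 % k, Nat.mod_lt _ kpos⟩ := rfl
      rw [he] at h0
      exact h0
    have hgk : g (k - 1) ≤ 0 := by
      have h0 := hy ⟨k - 1, by omega⟩
      have hnx : nxt (⟨k - 1, by omega⟩ : Fin k) = ⟨0, kpos⟩ := by
        have hkk : k - 1 + 1 = k := by omega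
        simp only [nxt, hkk, Nat.mod_self]
      rw [hnx] at h0
      -- h0 : 0 ≤ sg (Q ⟨k-1⟩) (Q ⟨0⟩) y ; g (k-1) = sg (Q ⟨0⟩) (Q ⟨k-1⟩) y
      have hmod : (k - 1) % k = k - 1 := Nat.mod_eq_of_lt (by omega)
      have hgv : g (k - 1) = sg (Q ⟨0, kpos⟩) (Q ⟨k - 1, by omega⟩) y := by
        simp only [hg]
        congr 2
        exact Fin.ext (by simpa using hmod)
      rw [hgv, sg_swap]
      rw [sg_cyc] at h0
      linarith
    obtain ⟨m3, hm3⟩ : ∃ m3, k - 1 = m3 + 2 := ⟨k - 3, by omega⟩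
    obtain ⟨j, hj1, hj2, hj3, hj4⟩ := ivt g m3 hg1 (by rw [← hm3]; exact hgk)
    rw [← hm3] at hj2
    have hjk : j < k := by omega
    have hjk1 : j + 1 < k := by omega
    have hgj : g j = sg (Q ⟨0, kpos⟩) (Q ⟨j, hjk⟩) y := by
      simp only [hg]; congr 2; exact Fin.ext (by simpa using Nat.mod_eq_of_lt hjk)
    have hgj1 : g (j + 1) = sg (Q ⟨0, kpos⟩) (Q ⟨j + 1, hjk1⟩) y := by
      simp only [hg]; congr 2; exact Fin.ext (by simpa using Nat.mod_eq_of_lt hjk1)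
    have hnj : nxt (⟨j, hjk⟩ : Fin k) = ⟨j + 1, hjk1⟩ := by
      simp only [nxt]; exact Fin.ext (by simpa using Nat.mod_eq_of_lt hjk1)
    have hS : 0 < sg (Q ⟨0, kpos⟩) (Q ⟨j, hjk⟩) (Q ⟨j + 1, hjk1⟩) :=
      H _ _ _ (by rw [Fin.lt_def]; show 0 < j; omega) (by rw [Fin.lt_def]; simp)
    have hα : 0 ≤ sg y (Q ⟨j, hjk⟩) (Q ⟨j + 1, hjk1⟩) := by
      have := hy ⟨j, hjk⟩
      rw [hnj] at this
      rw [sg_cyc]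
      exact this
    have hβ : 0 ≤ sg (Q ⟨0, kpos⟩) y (Q ⟨j + 1, hjk1⟩) := by
      rw [sg_swap]
      rw [hgj1] at hj4
      linarith
    have hγ : 0 ≤ sg (Q ⟨0, kpos⟩) (Q ⟨j, hjk⟩) y := by rw [← hgj]; exact hj3
    have := tri_mem hS hα hβ hγ
    refine convexHull_mono ?_ this
    rintro z hz
    rcases hz with rfl | rfl | rfl
    · exact ⟨_, rfl⟩
    · exact ⟨_, rfl⟩
    · exact ⟨_, rfl⟩
  -- final set equality
  rw [IsConvexPolygon, polygonEdges_eq]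
  apply Set.Subset.antisymm
  · intro p hp
    rw [Set.mem_iUnion] at hp
    obtain ⟨i, hpi⟩ := hp
    rw [hclosed.frontier_eq]
    refine ⟨?_, ?_⟩
    · have hmem : p ∈ convexHull ℝ ({Q i, Q (nxt i)} : Set (ℝ × ℝ)) := by
        rw [convexHull_pair]; exact hpi
      refine convexHull_mono ?_ hmem
      intro z hz
      rcases hz with rfl | rfl
      · exact ⟨i, rfl⟩
      · exact ⟨nxt i, rfl⟩
    · apply not_mem_interior_of_dir
        (u := ((Q (nxt i)).2 - (Q i).2, (Q i).1 - (Q (nxt i)).1))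
      intro t ht hmem
      have h1 := hsub i hmem
      rw [Set.mem_setOf_eq, sg_perturb] at h1
      have h2 : sg (Q i) (Q (nxt i)) p = 0 := sg_seg hpi
      have h3 : 0 < ((Q (nxt i)).1 - (Q i).1) ^ 2 + ((Q (nxt i)).2 - (Q i).2) ^ 2 := by
        have hne' : Q i ≠ Q (nxt i) := hne i
        by_contra hcon
        push_neg at hcon
        apply hne'
        have e1 : (Q (nxt i)).1 - (Q i).1 = 0 := by
          nlinarith [sq_nonneg ((Q (nxt i)).1 - (Q i).1), sq_nonneg ((Q (nxt i)).2 - (Q i).2)]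
        have e2 : (Q (nxt i)).2 - (Q i).2 = 0 := by
          nlinarith [sq_nonneg ((Q (nxt i)).1 - (Q i).1), sq_nonneg ((Q (nxt i)).2 - (Q i).2)]
        exact Prod.ext (by linarith) (by linarith)
      nlinarith [mul_pos ht h3]
  · intro x hx
    rw [hclosed.frontier_eq] at hx
    obtain ⟨hxh, hxi⟩ := hx
    by_cases hc : ∃ i, sg (Q i) (Q (nxt i)) x = 0
    · obtain ⟨i, hi⟩ := hc
      rw [Set.mem_iUnion]
      refine ⟨i, ?_⟩
      have h0 : ∀ m, 0 ≤ sg (Q i) (Q (nxt i)) (Q m) := fun m =>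
        hsub i (subset_convexHull ℝ _ ⟨m, rfl⟩)
      have hface := face_lemma h0 hxh hi
      have himg : Q '' {m | sg (Q i) (Q (nxt i)) (Q m) = 0}
          ⊆ ({Q i, Q (nxt i)} : Set (ℝ × ℝ)) := by
        rintro _ ⟨m, hm, rfl⟩
        by_cases h1 : m = i
        · simp [h1]
        · by_cases h2 : m = nxt i
          · simp [h2]
          · exact absurd hm (ne_of_gt (epos i m h1 h2))
      have hmono := convexHull_mono himg hface
      rwa [convexHull_pair] at hmono
    · push_neg at hc
      have hpos : ∀ i, 0 < sg (Q i) (Q (nxt i)) x := fun i =>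
        lt_of_le_of_ne (hsub i hxh) (Ne.symm (hc i))
      exfalso
      apply hxi
      have hU : IsOpen {y : ℝ × ℝ | ∀ i : Fin k, 0 < sg (Q i) (Q (nxt i)) y} := by
        have he : {y : ℝ × ℝ | ∀ i : Fin k, 0 < sg (Q i) (Q (nxt i)) y}
            = ⋂ i : Fin k, {y | 0 < sg (Q i) (Q (nxt i)) y} := by
          ext y; simp
        rw [he]
        exact isOpen_iInter_of_finite fun i => isOpen_lt continuous_const (sg_cont _ _)
      have hUsub : {y : ℝ × ℝ | ∀ i : Fin k, 0 < sg (Q i) (Q (nxt i)) y}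
          ⊆ convexHull ℝ (Set.range Q) :=
        fun y hy => tri_cover y fun i => (hy i).le
      exact interior_maximal hUsub hU hpos
lemma interior_segment_empty (a b : ℝ × ℝ) : interior (segment ℝ a b) = ∅ := by
  rw [Set.eq_empty_iff_forall_notMem]
  intro p hp
  by_cases hab : a = b
  · subst hab
    rw [segment_same] at hp
    have hpa : p ∈ ({a} : Set (ℝ × ℝ)) := interior_subset hp
    rw [Set.mem_singleton_iff] at hpa
    refine not_mem_interior_of_dir (u := ((1 : ℝ), (0 : ℝ))) ?_ hp
    intro t ht hmem
    rw [Set.mem_singleton_iff] at hmem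
    have h1 := congrArg Prod.fst hmem
    have h2 := congrArg Prod.fst hpa
    simp [Prod.smul_def] at h1 h2
    linarith
  · refine not_mem_interior_of_dir (u := (b.2 - a.2, a.1 - b.1)) ?_ hp
    intro t ht hmem
    have h0 : sg a b (p + t • ((b.2 - a.2, a.1 - b.1) : ℝ × ℝ)) = 0 := sg_seg hmem
    have h2 : sg a b p = 0 := sg_seg (interior_subset hp)
    rw [sg_perturb, h2] at h0
    have h3 : 0 < (b.1 - a.1) ^ 2 + (b.2 - a.2) ^ 2 := by
      by_contra hcon
      push_neg at hcon
      apply hab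
      have e1 : b.1 - a.1 = 0 := by nlinarith [sq_nonneg (b.1 - a.1), sq_nonneg (b.2 - a.2)]
      have e2 : b.2 - a.2 = 0 := by nlinarith [sq_nonneg (b.1 - a.1), sq_nonneg (b.2 - a.2)]
      exact Prod.ext (by linarith) (by linarith)
    nlinarith [mul_pos ht h3]

lemma frontier_segment (a b : ℝ × ℝ) : frontier (segment ℝ a b) = segment ℝ a b := by
  have hcl : IsClosed (segment ℝ a b) := by
    rw [← convexHull_pair]
    exact ((Set.finite_singleton b).insert a |>.isCompact_convexHull ℝ).isClosed
  rw [hcl.frontier_eq, interior_segment_empty, Set.diff_empty]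

lemma smallPolygon_convex {k : ℕ} (hk : k ≤ 2) (Q : Fin k → ℝ × ℝ) : IsConvexPolygon Q := by
  interval_cases k
  · rw [IsConvexPolygon, polygonEdges_eq]
    simp [Set.range_eq_empty]
  · rw [IsConvexPolygon, polygonEdges_eq]
    have h1 : ∀ i : Fin 1, nxt i = i := by decide
    have h2 : Set.range Q = {Q 0} := Set.range_unique
    rw [h2, convexHull_singleton]
    have h3 : (⋃ i : Fin 1, segment ℝ (Q i) (Q (nxt i))) = {Q 0} := by
      ext z
      simp only [h1, segment_same, Set.mem_iUnion, Set.mem_singleton_iff]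
      exact ⟨fun ⟨y, hy⟩ => by rw [Subsingleton.elim (0 : Fin 1) y]; exact hy,
        fun h => ⟨0, h⟩⟩
    rw [h3, ← segment_same (𝕜 := ℝ) (x := Q 0), frontier_segment, segment_same]
  · rw [IsConvexPolygon, polygonEdges_eq]
    have h1 : nxt (0 : Fin 2) = 1 := by decide
    have h2 : nxt (1 : Fin 2) = 0 := by decide
    have hsymm : segment ℝ (Q 1) (Q 0) = segment ℝ (Q 0) (Q 1) := segment_symm ℝ _ _
    have h3 : (⋃ i : Fin 2, segment ℝ (Q i) (Q (nxt i))) = segment ℝ (Q 0) (Q 1) := by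
      ext z
      simp only [Set.mem_iUnion, Fin.exists_fin_two, h1, h2, hsymm, or_self]
    have h4 : Set.range Q = {Q 0, Q 1} := by
      ext z
      simp [Fin.exists_fin_two, eq_comm]
    rw [h3, h4, convexHull_pair, frontier_segment]
noncomputable def mref : (ℝ × ℝ) ≃ₗ[ℝ] (ℝ × ℝ) :=
  (LinearEquiv.refl ℝ ℝ).prodCongr (LinearEquiv.neg ℝ)

lemma mref_apply (p : ℝ × ℝ) : mref p = (p.1, -p.2) := rfl

noncomputable def mrefH : (ℝ × ℝ) ≃ₜ (ℝ × ℝ) :=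
  mref.toContinuousLinearEquiv.toHomeomorph

lemma mrefH_apply (p : ℝ × ℝ) : mrefH p = (p.1, -p.2) := rfl

lemma transport_convexPolygon {k : ℕ} (Q : Fin k → ℝ × ℝ)
    (h : IsConvexPolygon (fun i => ((Q i).1, -(Q i).2))) : IsConvexPolygon Q := by
  have hQ : (fun i => ((Q i).1, -(Q i).2)) = (mref : (ℝ × ℝ) → (ℝ × ℝ)) ∘ Q := rfl
  rw [hQ] at h
  rw [IsConvexPolygon, polygonEdges_eq] at h ⊢
  have hedge : (⋃ i : Fin k, segment ℝ ((mref ∘ Q) i) ((mref ∘ Q) (nxt i)))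
      = (mref : (ℝ × ℝ) → (ℝ × ℝ)) '' ⋃ i : Fin k, segment ℝ (Q i) (Q (nxt i)) := by
    rw [Set.image_iUnion]
    refine Set.iUnion_congr fun i => ?_
    have := image_segment ℝ (mref.toLinearMap.toAffineMap) (Q i) (Q (nxt i))
    exact this.symm
  have hrange : Set.range ((mref : (ℝ × ℝ) → (ℝ × ℝ)) ∘ Q)
      = (mref : (ℝ × ℝ) → (ℝ × ℝ)) '' Set.range Q := Set.range_comp _ _
  have hhull : convexHull ℝ ((mref : (ℝ × ℝ) → (ℝ × ℝ)) '' Set.range Q)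
      = (mref : (ℝ × ℝ) → (ℝ × ℝ)) '' convexHull ℝ (Set.range Q) :=
    (mref.toLinearMap.image_convexHull (Set.range Q)).symm
  have hfront : frontier ((mref : (ℝ × ℝ) → (ℝ × ℝ)) '' convexHull ℝ (Set.range Q))
      = (mref : (ℝ × ℝ) → (ℝ × ℝ)) '' frontier (convexHull ℝ (Set.range Q)) := by
    have := mrefH.image_frontier (convexHull ℝ (Set.range Q))
    exact this.symm
  rw [hedge, hrange, hhull, hfront] at h
  exact Set.image_injective.2 mref.injective h

def r2 : ℕ → ℕ → ℕ
  | 0, _ => 0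
  | _ + 1, 0 => 0
  | s + 1, t + 1 => r2 s (t + 1) + r2 (s + 1) t + 1

lemma ramsey2 (s : ℕ) : ∀ (t : ℕ) (c : ℕ → ℕ → Bool) (A : Finset ℕ), r2 s t ≤ A.card →
    (∃ S ⊆ A, S.card = s ∧ ∀ i ∈ S, ∀ j ∈ S, i < j → c i j = true) ∨
    (∃ S ⊆ A, S.card = t ∧ ∀ i ∈ S, ∀ j ∈ S, i < j → c i j = false) := by
  induction s with
  | zero =>
    intro t c A _
    exact Or.inl ⟨∅, Finset.empty_subset _, Finset.card_empty, by simp⟩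
  | succ s ihs =>
    intro t
    induction t with
    | zero =>
      intro c A _
      exact Or.inr ⟨∅, Finset.empty_subset _, Finset.card_empty, by simp⟩
    | succ t iht =>
      intro c A hcard
      have hApos : 0 < A.card := lt_of_lt_of_le (by simp [r2]) hcard
      have hAne : A.Nonempty := Finset.card_pos.1 hApos
      set x := A.min' hAne with hx
      have hxA : x ∈ A := A.min'_mem hAne
      have hxmin : ∀ y ∈ A, x ≤ y := fun y hy => A.min'_le y hy
      set A' := A.erase x with hA'
      have hcardA' : A'.card = A.card - 1 := Finset.card_erase_of_mem hxA
      set B := A'.filter (fun y => c x y = true) with hB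
      set C := A'.filter (fun y => ¬ c x y = true) with hC
      have hBC : B.card + C.card = A'.card := Finset.card_filter_add_card_filter_not _
      have hr2 : r2 (s + 1) (t + 1) = r2 s (t + 1) + r2 (s + 1) t + 1 := by simp [r2]
      have hcase : r2 s (t + 1) ≤ B.card ∨ r2 (s + 1) t ≤ C.card := by omega
      rcases hcase with hc1 | hc2
      · rcases ihs (t + 1) c B hc1 with ⟨S, hSB, hScard, hSmono⟩ | ⟨S, hSB, hScard, hSmono⟩
        · left
          have hSA' : S ⊆ A' := hSB.trans (Finset.filter_subset _ _)
          have hxS : x ∉ S := fun hxs => Finset.notMem_erase x A (hSA' hxs)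
          refine ⟨insert x S, ?_, ?_, ?_⟩
          · intro y hy
            rcases Finset.mem_insert.1 hy with rfl | hy'
            · exact hxA
            · exact Finset.erase_subset x A (hSA' hy')
          · rw [Finset.card_insert_of_notMem hxS, hScard]
          · intro i hi j hj hij
            rcases Finset.mem_insert.1 hi with rfl | hi'
            · rcases Finset.mem_insert.1 hj with rfl | hj'
              · omega
              · exact (Finset.mem_filter.1 (hSB hj')).2
            · rcases Finset.mem_insert.1 hj with rfl | hj'
              · have := hxmin i (Finset.erase_subset x A (hSA' hi'))
                omega
              · exact hSmono i hi' j hj' hij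
        · right
          exact ⟨S, hSB.trans ((Finset.filter_subset _ _).trans (Finset.erase_subset x A)),
            hScard, hSmono⟩
      · rcases iht c C hc2 with ⟨S, hSC, hScard, hSmono⟩ | ⟨S, hSC, hScard, hSmono⟩
        · left
          exact ⟨S, hSC.trans ((Finset.filter_subset _ _).trans (Finset.erase_subset x A)),
            hScard, hSmono⟩
        · right
          have hSA' : S ⊆ A' := hSC.trans (Finset.filter_subset _ _)
          have hxS : x ∉ S := fun hxs => Finset.notMem_erase x A (hSA' hxs)
          refine ⟨insert x S, ?_, ?_, ?_⟩
          · intro y hy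
            rcases Finset.mem_insert.1 hy with rfl | hy'
            · exact hxA
            · exact Finset.erase_subset x A (hSA' hy')
          · rw [Finset.card_insert_of_notMem hxS, hScard]
          · intro i hi j hj hij
            rcases Finset.mem_insert.1 hi with rfl | hi'
            · rcases Finset.mem_insert.1 hj with rfl | hj'
              · omega
              · have h2 := (Finset.mem_filter.1 (hSC hj')).2
                simpa using h2
            · rcases Finset.mem_insert.1 hj with rfl | hj'
              · have := hxmin i (Finset.erase_subset x A (hSA' hi'))
                omega
              · exact hSmono i hi' j hj' hij
def r3 : ℕ → ℕ → ℕ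
  | 0, _ => 0
  | _ + 1, 0 => 0
  | s + 1, t + 1 => r2 (r3 s (t + 1)) (r3 (s + 1) t) + 1

lemma ramsey3 (s : ℕ) : ∀ (t : ℕ) (c : ℕ → ℕ → ℕ → Bool) (A : Finset ℕ), r3 s t ≤ A.card →
    (∃ S ⊆ A, S.card = s ∧
      ∀ i ∈ S, ∀ j ∈ S, ∀ l ∈ S, i < j → j < l → c i j l = true) ∨
    (∃ S ⊆ A, S.card = t ∧
      ∀ i ∈ S, ∀ j ∈ S, ∀ l ∈ S, i < j → j < l → c i j l = false) := by
  induction s with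
  | zero =>
    intro t c A _
    exact Or.inl ⟨∅, Finset.empty_subset _, Finset.card_empty, by simp⟩
  | succ s ihs =>
    intro t
    induction t with
    | zero =>
      intro c A _
      exact Or.inr ⟨∅, Finset.empty_subset _, Finset.card_empty, by simp⟩
    | succ t iht =>
      intro c A hcard
      have hr3 : r3 (s + 1) (t + 1) = r2 (r3 s (t + 1)) (r3 (s + 1) t) + 1 := by simp [r3]
      have hApos : 0 < A.card := by omega
      have hAne : A.Nonempty := Finset.card_pos.1 hApos
      set x := A.min' hAne with hx
      have hxA : x ∈ A := A.min'_mem hAne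
      have hxmin : ∀ y ∈ A, x ≤ y := fun y hy => A.min'_le y hy
      set A' := A.erase x with hA'
      have hcardA' : A'.card = A.card - 1 := Finset.card_erase_of_mem hxA
      have hsubA' : A' ⊆ A := Finset.erase_subset x A
      have hxA' : x ∉ A' := Finset.notMem_erase x A
      rcases ramsey2 (r3 s (t + 1)) (r3 (s + 1) t) (fun i j => c x i j) A' (by omega) with
        ⟨T, hTA, hTcard, hTmono⟩ | ⟨T, hTA, hTcard, hTmono⟩
      · rcases ihs (t + 1) c T (le_of_eq hTcard.symm) with
          ⟨S, hST, hScard, hSmono⟩ | ⟨S, hST, hScard, hSmono⟩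
        · left
          have hSA' : S ⊆ A' := hST.trans hTA
          have hxS : x ∉ S := fun hxs => hxA' (hSA' hxs)
          refine ⟨insert x S, ?_, ?_, ?_⟩
          · intro y hy
            rcases Finset.mem_insert.1 hy with rfl | hy'
            · exact hxA
            · exact hsubA' (hSA' hy')
          · rw [Finset.card_insert_of_notMem hxS, hScard]
          · intro i hi j hj l hl hij hjl
            rcases Finset.mem_insert.1 hi with rfl | hi'
            · rcases Finset.mem_insert.1 hj with rfl | hj'
              · omega
              · rcases Finset.mem_insert.1 hl with rfl | hl'
                · have := hxmin j (hsubA' (hSA' hj')); omega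
                · exact hTmono j (hST hj') l (hST hl') hjl
            · rcases Finset.mem_insert.1 hj with rfl | hj'
              · have := hxmin i (hsubA' (hSA' hi')); omega
              · rcases Finset.mem_insert.1 hl with rfl | hl'
                · have := hxmin j (hsubA' (hSA' hj')); omega
                · exact hSmono i hi' j hj' l hl' hij hjl
        · right
          exact ⟨S, hST.trans (hTA.trans hsubA'), hScard, hSmono⟩
      · rcases iht c T (le_of_eq hTcard.symm) with
          ⟨S, hST, hScard, hSmono⟩ | ⟨S, hST, hScard, hSmono⟩
        · left
          exact ⟨S, hST.trans (hTA.trans hsubA'), hScard, hSmono⟩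
        · right
          have hSA' : S ⊆ A' := hST.trans hTA
          have hxS : x ∉ S := fun hxs => hxA' (hSA' hxs)
          refine ⟨insert x S, ?_, ?_, ?_⟩
          · intro y hy
            rcases Finset.mem_insert.1 hy with rfl | hy'
            · exact hxA
            · exact hsubA' (hSA' hy')
          · rw [Finset.card_insert_of_notMem hxS, hScard]
          · intro i hi j hj l hl hij hjl
            rcases Finset.mem_insert.1 hi with rfl | hi'
            · rcases Finset.mem_insert.1 hj with rfl | hj'
              · omega
              · rcases Finset.mem_insert.1 hl with rfl | hl'
                · have := hxmin j (hsubA' (hSA' hj')); omega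
                · have h2 := hTmono j (hST hj') l (hST hl') hjl
                  simpa using h2
            · rcases Finset.mem_insert.1 hj with rfl | hj'
              · have := hxmin i (hsubA' (hSA' hi')); omega
              · rcases Finset.mem_insert.1 hl with rfl | hl'
                · have := hxmin j (hsubA' (hSA' hj')); omega
                · exact hSmono i hi' j hj' l hl' hij hjl

lemma collinear_of_sg {a b c : ℝ × ℝ} (h : sg a b c = 0) :
    Collinear ℝ ({a, b, c} : Set (ℝ × ℝ)) := by
  by_cases hab : a = b
  · subst hab
    have he : ({a, a, c} : Set (ℝ × ℝ)) = {a, c} := by simp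
    rw [he]
    exact collinear_pair ℝ a c
  · apply (collinear_iff_of_mem (show a ∈ ({a, b, c} : Set (ℝ × ℝ)) by simp)).2
    refine ⟨b - a, ?_⟩
    have key : ∀ t : ℝ, (t • (b - a) +ᵥ a : ℝ × ℝ)
        = (t * (b.1 - a.1) + a.1, t * (b.2 - a.2) + a.2) := by
      intro t
      apply Prod.ext <;> simp [Prod.smul_def] <;> ring
    intro p hp
    rcases hp with rfl | rfl | rfl
    · exact ⟨0, by rw [key]; apply Prod.ext <;> simp⟩
    · exact ⟨1, by rw [key]; apply Prod.ext <;> simp⟩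
    · rw [sg] at h
      by_cases h1 : b.1 = a.1
      · have h2 : b.2 ≠ a.2 := fun h2 => hab (Prod.ext h1.symm h2.symm)
        have hb2 : b.2 - a.2 ≠ 0 := fun h3 => h2 (by linarith)
        have hp1 : p.1 = a.1 := by
          have h4 : (b.2 - a.2) * (p.1 - a.1) = 0 := by
            linear_combination -h + (p.2 - a.2) * h1
          rcases mul_eq_zero.1 h4 with h5 | h5
          · exact absurd h5 hb2
          · linarith
        refine ⟨(p.2 - a.2) / (b.2 - a.2), ?_⟩
        rw [key]
        apply Prod.ext
        · rw [h1]; simp [hp1]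
        · rw [div_mul_cancel₀ _ hb2]; ring
      · have hb1 : b.1 - a.1 ≠ 0 := fun h3 => h1 (by linarith)
        refine ⟨(p.1 - a.1) / (b.1 - a.1), ?_⟩
        rw [key]
        apply Prod.ext
        · field_simp; ring
        · field_simp
          linear_combination h


/-- For every `k` there is `F k` such that every strict `n`-gon with `n ≥ F k`
has a convex sub-`k`-gon. -/
theorem exists_bound_convex_subpolygon_of_strict :
    ∃ F : ℕ → ℕ, ∀ (k n : ℕ) (P : Fin n → ℝ × ℝ), IsStrictPolygon P → F k ≤ n →
      ∃ e : Fin k → Fin n, StrictMono e ∧ IsConvexPolygon (P ∘ e) := by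
  classical
  refine ⟨fun k => max (r3 k k) k, ?_⟩
  intro k n P hP hF
  have hkn : k ≤ n := le_trans (le_max_right _ _) hF
  by_cases hk2 : k ≤ 2
  · refine ⟨fun i => ⟨i.1, lt_of_lt_of_le i.2 hkn⟩, ?_, smallPolygon_convex hk2 _⟩
    intro a b hab
    rw [Fin.lt_def] at hab ⊢
    exact hab
  · have hk3 : 3 ≤ k := by omega
    have hnpos : 0 < n := by omega
    set c : ℕ → ℕ → ℕ → Bool := fun i j l =>
      decide (0 < sg (P ⟨i % n, Nat.mod_lt _ hnpos⟩) (P ⟨j % n, Nat.mod_lt _ hnpos⟩)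
        (P ⟨l % n, Nat.mod_lt _ hnpos⟩)) with hcdef
    have hr3n : r3 k k ≤ (Finset.range n).card := by
      rw [Finset.card_range]
      exact le_trans (le_max_left _ _) hF
    -- strictness: nonzero orientation for distinct indices
    have hnz : ∀ u v w : Fin n, u ≠ v → u ≠ w → v ≠ w → sg (P u) (P v) (P w) ≠ 0 :=
      fun u v w h1 h2 h3 h => hP u v w h1 h2 h3 (collinear_of_sg h)
    rcases ramsey3 k k c (Finset.range n) hr3n with
      ⟨S, hSsub, hScard, hSmono⟩ | ⟨S, hSsub, hScard, hSmono⟩ <;>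
    · -- common construction of e
      set φ := S.orderIsoOfFin hScard with hφ
      have hmemS : ∀ i : Fin k, (φ i : ℕ) ∈ S := fun i => (φ i).2
      have hlt : ∀ i : Fin k, (φ i : ℕ) < n := fun i => Finset.mem_range.1 (hSsub (hmemS i))
      set e : Fin k → Fin n := fun i => ⟨(φ i : ℕ), hlt i⟩ with he
      have hmono : StrictMono e := by
        intro a b hab
        rw [Fin.lt_def]
        exact Subtype.coe_lt_coe.2 (φ.lt_iff_lt.2 hab)
      have heval : ∀ i : Fin k, (⟨(φ i : ℕ) % n, Nat.mod_lt _ hnpos⟩ : Fin n) = e i :=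
        fun i => Fin.ext (Nat.mod_eq_of_lt (hlt i))
      have hene : ∀ i j : Fin k, i ≠ j → e i ≠ e j := fun i j hij => hmono.injective.ne hij
      refine ⟨e, hmono, ?_⟩
      first
      | -- CCW case
        (apply ccw_convexPolygon hk3
         intro i j l hij hjl
         have hm := hSmono _ (hmemS i) _ (hmemS j) _ (hmemS l)
           (Subtype.coe_lt_coe.2 (φ.lt_iff_lt.2 hij)) (Subtype.coe_lt_coe.2 (φ.lt_iff_lt.2 hjl))
         rw [hcdef] at hm
         simp only [decide_eq_true_eq] at hm
         rw [heval i, heval j, heval l] at hm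
         exact hm)
      | -- CW case
        (apply transport_convexPolygon
         apply ccw_convexPolygon hk3
         intro i j l hij hjl
         simp only [Function.comp_apply]
         rw [sg_refl]
         have hm := hSmono _ (hmemS i) _ (hmemS j) _ (hmemS l)
           (Subtype.coe_lt_coe.2 (φ.lt_iff_lt.2 hij)) (Subtype.coe_lt_coe.2 (φ.lt_iff_lt.2 hjl))
         rw [hcdef] at hm
         simp only [decide_eq_false_iff_not, not_lt] at hm
         rw [heval i, heval j, heval l] at hm
         have hne0 : sg (P (e i)) (P (e j)) (P (e l)) ≠ 0 :=
           hnz _ _ _ (hene i j (Fin.ne_of_lt hij)) (hene i l (Fin.ne_of_lt (hij.trans hjl)))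
             (hene j l (Fin.ne_of_lt hjl))
         have : sg (P (e i)) (P (e j)) (P (e l)) < 0 := lt_of_le_of_ne hm hne0
         linarith)
end
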